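/- arXiv:2406.17870 — 7 statements merged into one kernel-verified Lean document; each statement's English description precedes it below -/
import Mathlib

section
/- The equidistant dimension of the Johnson graph J(5,2) equals 3; moreover, S = {{1,2},{1,3},{2,3}} is a minimum distance-equalizer set of J(5,2). -/
set_option maxRecDepth 4000

/-- The Johnson graph `J(n,k)`: vertices are the `k`-element subsets of an `n`-element set,
two vertices being adjacent iff their intersection has cardinality `k-1`. -/
def johnsonGraph (n k : ℕ) : SimpleGraph {A : Finset (Fin n) // A.card = k} where
  Adj A B := A ≠ B ∧ (A.1 ∩ B.1).card = k - 1
  symm := ⟨fun A B ⟨hne, hc⟩ => ⟨hne.symm, by rwa [Finset.inter_comm]⟩⟩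
  loopless := ⟨fun A ⟨hne, _⟩ => hne rfl⟩

/-- The Kneser graph `K(n,k)`: vertices are the `k`-element subsets of an `n`-element set,
two vertices being adjacent iff they are disjoint. -/
def kneserGraph (n k : ℕ) : SimpleGraph {A : Finset (Fin n) // A.card = k} where
  Adj A B := A ≠ B ∧ A.1 ∩ B.1 = ∅
  symm := ⟨fun A B ⟨hne, hc⟩ => ⟨hne.symm, by rwa [Finset.inter_comm]⟩⟩
  loopless := ⟨fun A ⟨hne, _⟩ => hne rfl⟩

/-- `S` is a distance-equalizer set of `G` if for every two distinct vertices
`u, v ∉ S` there is a vertex `x ∈ S` equidistant from `u` and `v`. -/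
def IsDistanceEqualizerSet {V : Type*} (G : SimpleGraph V) (S : Set V) : Prop :=
  ∀ u v : V, u ∉ S → v ∉ S → u ≠ v → ∃ x ∈ S, G.dist u x = G.dist v x

/-- The equidistant dimension of `G`: the minimum cardinality of a distance-equalizer set. -/
noncomputable def eqdim {V : Type*} [Fintype V] (G : SimpleGraph V) : ℕ :=
  sInf {m | ∃ S : Finset V, IsDistanceEqualizerSet G ↑S ∧ S.card = m}

instance (n k : ℕ) : DecidableRel (johnsonGraph n k).Adj :=
  fun A B => inferInstanceAs (Decidable (A ≠ B ∧ (A.1 ∩ B.1).card = k - 1))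

instance (n k : ℕ) : DecidableRel (kneserGraph n k).Adj :=
  fun A B => inferInstanceAs (Decidable (A ≠ B ∧ A.1 ∩ B.1 = ∅))

/-! ### Auxiliary material for `J(5,2)` -/

abbrev JV := {A : Finset (Fin 5) // A.card = 2}

/-- Decidable formula for the distance in `J(5,2)` (which has diameter 2). -/
def jd (u v : JV) : ℕ := if u = v then 0 else if (johnsonGraph 5 2).Adj u v then 1 else 2

lemma johnson_mid : ∀ u v : JV, u ≠ v → ¬ (johnsonGraph 5 2).Adj u v →
    ∃ w, (johnsonGraph 5 2).Adj u w ∧ (johnsonGraph 5 2).Adj w v := by decide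

lemma jdist_eq (u v : JV) : (johnsonGraph 5 2).dist u v = jd u v := by
  unfold jd
  split_ifs with h1 h2
  · subst h1; exact SimpleGraph.dist_self
  · exact SimpleGraph.dist_eq_one_iff_adj.mpr h2
  · obtain ⟨w, hw1, hw2⟩ := johnson_mid u v h1 h2
    have hle : (johnsonGraph 5 2).dist u v ≤ 2 := by
      have := SimpleGraph.dist_le
        (SimpleGraph.Walk.cons hw1 (SimpleGraph.Walk.cons hw2 SimpleGraph.Walk.nil))
      simpa using this
    have hr : (johnsonGraph 5 2).Reachable u v :=
      ⟨SimpleGraph.Walk.cons hw1 (SimpleGraph.Walk.cons hw2 SimpleGraph.Walk.nil)⟩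
    have hpos := hr.pos_dist_of_ne h1
    have hne1 : (johnsonGraph 5 2).dist u v ≠ 1 := fun h =>
      h2 (SimpleGraph.dist_eq_one_iff_adj.mp h)
    omega

/-- Decidable version of `IsDistanceEqualizerSet` for finsets in `J(5,2)`. -/
def jDES (S : Finset JV) : Prop :=
  ∀ u v : JV, u ∉ S → v ∉ S → u ≠ v → ∃ x ∈ S, jd u x = jd v x

instance (S : Finset JV) : Decidable (jDES S) := by unfold jDES; infer_instance

lemma jDES_iff (S : Finset JV) :
    IsDistanceEqualizerSet (johnsonGraph 5 2) ↑S ↔ jDES S := by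
  unfold IsDistanceEqualizerSet jDES
  simp only [jdist_eq, Finset.mem_coe]

lemma jDES_mono {S T : Finset JV} (hST : S ⊆ T) (h : jDES S) : jDES T :=
  fun u v hu hv hne =>
    let ⟨x, hx, hd⟩ := h u v (fun h' => hu (hST h')) (fun h' => hv (hST h')) hne
    ⟨x, hST hx, hd⟩

lemma no_jDES_pair : ∀ x y : JV, ¬ jDES {x, y} := by decide

lemma subset_pair (S : Finset JV) (h : S.card ≤ 2) : ∃ x y : JV, S ⊆ {x, y} := by
  rcases hc : S.card with _ | _ | _ | n
  · rw [Finset.card_eq_zero] at hc; subst hc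
    exact ⟨⟨{0,1}, by decide⟩, ⟨{0,1}, by decide⟩, by simp⟩
  · rw [Finset.card_eq_one] at hc; obtain ⟨x, rfl⟩ := hc; exact ⟨x, x, by simp⟩
  · rw [Finset.card_eq_two] at hc; obtain ⟨x, y, _, rfl⟩ := hc; exact ⟨x, y, subset_rfl⟩
  · omega

lemma jDES_lower (S : Finset JV) (h : S.card ≤ 2) : ¬ jDES S := fun hS => by
  obtain ⟨x, y, hxy⟩ := subset_pair S h
  exact no_jDES_pair x y (jDES_mono hxy hS)

lemma jDES_upper :
    jDES {⟨{0,1}, by decide⟩, ⟨{0,2}, by decide⟩, ⟨{1,2}, by decide⟩} := by decide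

/-- `eqdim(J(5,2)) = 3`, and `S = {{1,2},{1,3},{2,3}}` is a minimum distance-equalizer set of
`J(5,2)` (here realized in `Fin 5` as `{{0,1},{0,2},{1,2}}`). -/
theorem eqdim_johnson_five_two :
    eqdim (johnsonGraph 5 2) = 3 ∧
    IsDistanceEqualizerSet (johnsonGraph 5 2)
      {(⟨{0, 1}, by decide⟩ : {A : Finset (Fin 5) // A.card = 2}), ⟨{0, 2}, by decide⟩,
        ⟨{1, 2}, by decide⟩} ∧
    ({(⟨{0, 1}, by decide⟩ : {A : Finset (Fin 5) // A.card = 2}), ⟨{0, 2}, by decide⟩,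
        ⟨{1, 2}, by decide⟩} : Set {A : Finset (Fin 5) // A.card = 2}).ncard = 3 := by
  set a : JV := ⟨{0,1}, by decide⟩
  set b : JV := ⟨{0,2}, by decide⟩
  set c : JV := ⟨{1,2}, by decide⟩
  have hcoe : ({a, b, c} : Set JV) = ↑({a, b, c} : Finset JV) := by simp
  have hS : IsDistanceEqualizerSet (johnsonGraph 5 2) ({a, b, c} : Set JV) := by
    rw [hcoe, jDES_iff]; exact jDES_upper
  have hmem : (3 : ℕ) ∈ {m | ∃ S : Finset JV,
      IsDistanceEqualizerSet (johnsonGraph 5 2) ↑S ∧ S.card = m} :=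
    ⟨{a, b, c}, by rw [jDES_iff]; exact jDES_upper, by decide⟩
  refine ⟨?_, hS, ?_⟩
  · unfold eqdim
    refine le_antisymm (Nat.sInf_le hmem) (le_csInf ⟨3, hmem⟩ ?_)
    rintro m ⟨S, hSdes, rfl⟩
    by_contra hlt
    exact jDES_lower S (by omega) ((jDES_iff S).mp hSdes)
  · exact Set.ncard_eq_three.mpr ⟨a, b, c, by decide, by decide, by decide, rfl⟩
end

section
/- For every integer n ≥ 6, the set S = {{1,2},{1,3},{2,3}} is a distance-equalizer set of the Johnson graph J(n,2); that is, for every two distinct 2-element subsets X, Y of {1,…,n} with X, Y ∉ S there exists Z ∈ S with d(X,Z) = d(Y,Z) in J(n,2). -/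
lemma card_inter_pair {n : ℕ} (A : Finset (Fin n)) (a b : Fin n) (hab : a ≠ b) :
    (A ∩ {a, b}).card = (if a ∈ A then 1 else 0) + (if b ∈ A then 1 else 0) := by
  classical
  have : A ∩ {a, b} = (A ∩ {a}) ∪ (A ∩ {b}) := by
    rw [← Finset.inter_union_distrib_left]; rfl
  have ea : (A ∩ {a}).card = if a ∈ A then 1 else 0 := by
    split_ifs with h
    · rw [Finset.inter_singleton_of_mem h, Finset.card_singleton]
    · rw [Finset.inter_singleton_of_notMem h, Finset.card_empty]
  have eb : (A ∩ {b}).card = if b ∈ A then 1 else 0 := by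
    split_ifs with h
    · rw [Finset.inter_singleton_of_mem h, Finset.card_singleton]
    · rw [Finset.inter_singleton_of_notMem h, Finset.card_empty]
  rw [this, Finset.card_union_of_disjoint, ea, eb]
  · simp only [Finset.disjoint_left, Finset.mem_inter, Finset.mem_singleton]
    rintro x ⟨-, rfl⟩ ⟨-, rfl⟩; exact hab rfl

lemma johnson_dist {n : ℕ} (X Z : {A : Finset (Fin n) // A.card = 2}) :
    (johnsonGraph n 2).dist X Z = 2 - (X.1 ∩ Z.1).card := by
  classical
  have hle : (X.1 ∩ Z.1).card ≤ 2 := le_trans (Finset.card_le_card Finset.inter_subset_left) (le_of_eq X.2)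
  interval_cases h : (X.1 ∩ Z.1).card
  · -- disjoint, dist = 2
    have hdisj : X.1 ∩ Z.1 = ∅ := Finset.card_eq_zero.mp h
    obtain ⟨x, hx⟩ := Finset.card_pos.mp (by rw [X.2]; norm_num)
    obtain ⟨z, hz⟩ := Finset.card_pos.mp (by rw [Z.2]; norm_num)
    have hzX : z ∉ X.1 := fun hzx => by
      have : z ∈ X.1 ∩ Z.1 := Finset.mem_inter.mpr ⟨hzx, hz⟩
      simp [hdisj] at this
    have hxZ : x ∉ Z.1 := fun hxz => by
      have : x ∈ X.1 ∩ Z.1 := Finset.mem_inter.mpr ⟨hx, hxz⟩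
      simp [hdisj] at this
    have hxz : x ≠ z := fun e => hzX (e ▸ hx)
    set W : {A : Finset (Fin n) // A.card = 2} := ⟨{x, z}, Finset.card_pair hxz⟩ with hW
    have hXW : (johnsonGraph n 2).Adj X W := by
      refine ⟨fun e => hzX (by rw [e]; exact Finset.mem_insert_of_mem (Finset.mem_singleton_self z)), ?_⟩
      rw [card_inter_pair X.1 x z hxz, if_pos hx, if_neg hzX]
    have hWZ : (johnsonGraph n 2).Adj W Z := by
      refine ⟨fun e => hxZ (by rw [← e]; exact Finset.mem_insert_self x {z}), ?_⟩
      show ((({x, z} : Finset (Fin n))) ∩ Z.1).card = 1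
      rw [Finset.inter_comm, card_inter_pair Z.1 x z hxz, if_neg hxZ, if_pos hz]
    have hXZ : X ≠ Z := by
      intro e; rw [e, Finset.inter_self, Z.2] at h; omega
    have hd2 : (johnsonGraph n 2).dist X Z ≤ 2 :=
      SimpleGraph.dist_le (SimpleGraph.Walk.cons hXW (SimpleGraph.Walk.cons hWZ SimpleGraph.Walk.nil))
    have hreach : (johnsonGraph n 2).Reachable X Z :=
      ⟨SimpleGraph.Walk.cons hXW (SimpleGraph.Walk.cons hWZ SimpleGraph.Walk.nil)⟩
    have h0 : (johnsonGraph n 2).dist X Z ≠ 0 :=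
      fun he => hXZ (hreach.dist_eq_zero_iff.mp he)
    have h1 : (johnsonGraph n 2).dist X Z ≠ 1 := by
      intro he
      have hc := (SimpleGraph.dist_eq_one_iff_adj.mp he).2
      omega
    omega
  · -- adjacent
    have hne : X ≠ Z := by
      intro e; rw [e, Finset.inter_self, Z.2] at h; omega
    rw [SimpleGraph.dist_eq_one_iff_adj.mpr (show (johnsonGraph n 2).Adj X Z from ⟨hne, h⟩)]
  · -- equal
    have : X.1 ⊆ Z.1 := by
      have h1 : X.1 ∩ Z.1 = X.1 :=
        Finset.eq_of_subset_of_card_le Finset.inter_subset_left (by rw [X.2, h])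
      intro a ha; rw [← h1] at ha; exact (Finset.mem_inter.mp ha).2
    have hXZ : X = Z := Subtype.ext (Finset.eq_of_subset_of_card_le this (by rw [X.2, Z.2]))
    rw [hXZ, SimpleGraph.dist_self]

lemma pick_pair (a0 a1 a2 b0 b1 b2 : ℕ) (ha0 : a0 ≤ 1) (ha1 : a1 ≤ 1) (ha2 : a2 ≤ 1)
    (hb0 : b0 ≤ 1) (hb1 : b1 ≤ 1) (hb2 : b2 ≤ 1) (ha : a0 + a1 + a2 ≤ 1) (hb : b0 + b1 + b2 ≤ 1) :
    a0 + a1 = b0 + b1 ∨ a0 + a2 = b0 + b2 ∨ a1 + a2 = b1 + b2 := by omega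

/-- For every `n ≥ 6`, the set `S = {{1,2},{1,3},{2,3}}` (realized in `Fin n` as
`{{0,1},{0,2},{1,2}}`) is a distance-equalizer set of the Johnson graph `J(n,2)`. -/
theorem johnson_two_distanceEqualizer (n : ℕ) (hn : 6 ≤ n) :
    IsDistanceEqualizerSet (johnsonGraph n 2)
      ({⟨{⟨0, by omega⟩, ⟨1, by omega⟩}, Finset.card_pair (Fin.ne_of_val_ne (by simp))⟩,
        ⟨{⟨0, by omega⟩, ⟨2, by omega⟩}, Finset.card_pair (Fin.ne_of_val_ne (by simp))⟩,
        ⟨{⟨1, by omega⟩, ⟨2, by omega⟩}, Finset.card_pair (Fin.ne_of_val_ne (by simp))⟩} :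
        Set {A : Finset (Fin n) // A.card = 2}) := by
  classical
  intro u v hu hv huv
  set e0 : Fin n := ⟨0, by omega⟩
  set e1 : Fin n := ⟨1, by omega⟩
  set e2 : Fin n := ⟨2, by omega⟩
  have h01 : e0 ≠ e1 := Fin.ne_of_val_ne (by simp)
  have h02 : e0 ≠ e2 := Fin.ne_of_val_ne (by simp)
  have h12 : e1 ≠ e2 := Fin.ne_of_val_ne (by simp [e1, e2])
  -- at most one of e0,e1,e2 in a vertex not in S
  have key : ∀ (A : {B : Finset (Fin n) // B.card = 2}),
      A ∉ ({⟨{e0, e1}, Finset.card_pair h01⟩, ⟨{e0, e2}, Finset.card_pair h02⟩,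
            ⟨{e1, e2}, Finset.card_pair h12⟩} : Set {B : Finset (Fin n) // B.card = 2}) →
      (if e0 ∈ A.1 then 1 else 0) + (if e1 ∈ A.1 then 1 else 0) + (if e2 ∈ A.1 then 1 else 0) ≤ 1 := by
    intro A hA
    have sub : ∀ a b : Fin n, a ≠ b → a ∈ A.1 → b ∈ A.1 → A.1 = {a, b} := by
      intro a b hab haA hbA
      refine (Finset.eq_of_subset_of_card_le ?_ ?_).symm
      · intro x hx
        rcases Finset.mem_insert.mp hx with rfl | hx
        · exact haA
        · exact Finset.mem_singleton.mp hx ▸ hbA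
      · rw [A.2, Finset.card_pair hab]
    split_ifs with p0 p1 p2 p2 p1 p2 <;> try omega
    · exact absurd (Or.inl (Subtype.ext (sub e0 e1 h01 p0 p1))) hA
    · exact absurd (Or.inl (Subtype.ext (sub e0 e1 h01 p0 p1))) hA
    · exact absurd (Or.inr (Or.inl (Subtype.ext (sub e0 e2 h02 p0 p2)))) hA
    · exact absurd (Or.inr (Or.inr (Subtype.ext (sub e1 e2 h12 p1 p2)))) hA
  have hsum_u := key u hu
  have hsum_v := key v hv
  rcases pick_pair _ _ _ _ _ _ (by split_ifs <;> omega) (by split_ifs <;> omega)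
      (by split_ifs <;> omega) (by split_ifs <;> omega) (by split_ifs <;> omega)
      (by split_ifs <;> omega) hsum_u hsum_v with h | h | h
  · refine ⟨⟨{e0, e1}, Finset.card_pair h01⟩, Or.inl rfl, ?_⟩
    rw [johnson_dist, johnson_dist]
    simp only [card_inter_pair u.1 e0 e1 h01, card_inter_pair v.1 e0 e1 h01] at h ⊢
    rw [h]
  · refine ⟨⟨{e0, e2}, Finset.card_pair h02⟩, Or.inr (Or.inl rfl), ?_⟩
    rw [johnson_dist, johnson_dist]
    simp only [card_inter_pair u.1 e0 e2 h02, card_inter_pair v.1 e0 e2 h02] at h ⊢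
    rw [h]
  · refine ⟨⟨{e1, e2}, Finset.card_pair h12⟩, Or.inr (Or.inr rfl), ?_⟩
    rw [johnson_dist, johnson_dist]
    simp only [card_inter_pair u.1 e1 e2 h12, card_inter_pair v.1 e1 e2 h12] at h ⊢
    rw [h]
end

section
/- For every integer n ≥ 5, every distance-equalizer set of the Johnson graph J(n,2) has cardinality at least 3; equivalently, eqdim(J(n,2)) ≥ 3. -/
section JohnsonAux

variable {n : ℕ}

private lemma pair_inter_singleton {b e : Fin n} {x : Finset (Fin n)}
    (hb : b ∈ x) (he : e ∉ x) : ({b, e} : Finset (Fin n)) ∩ x = {b} := by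
  ext t
  simp only [Finset.mem_inter, Finset.mem_insert, Finset.mem_singleton]
  constructor
  · rintro ⟨rfl | rfl, ht⟩
    · rfl
    · exact absurd ht he
  · rintro rfl
    exact ⟨Or.inl rfl, hb⟩

private lemma pair_inter_empty {c e : Fin n} {x : Finset (Fin n)}
    (hc : c ∉ x) (he : e ∉ x) : ({c, e} : Finset (Fin n)) ∩ x = ∅ := by
  ext t
  simp only [Finset.mem_inter, Finset.mem_insert, Finset.mem_singleton,
    Finset.notMem_empty, iff_false, not_and]
  rintro (rfl | rfl) <;> assumption

/-- If `u` is adjacent to `x` and `v` is not adjacent to `x`, the distances differ. -/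
private lemma dist_ne_of_adj_of_not_adj {V : Type*} {G : SimpleGraph V} {u v x : V}
    (h1 : G.Adj u x) (h2 : ¬ G.Adj v x) : G.dist u x ≠ G.dist v x := by
  intro h
  rw [SimpleGraph.dist_eq_one_iff_adj.mpr h1] at h
  exact h2 (SimpleGraph.dist_eq_one_iff_adj.mp h.symm)

private lemma johnson_adj {A B : {A : Finset (Fin n) // A.card = 2}}
    (hne : A.1 ≠ B.1) (hc : (A.1 ∩ B.1).card = 1) : (johnsonGraph n 2).Adj A B :=
  ⟨fun h => hne (congrArg Subtype.val h), hc⟩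

private lemma johnson_not_adj {A B : {A : Finset (Fin n) // A.card = 2}}
    (hc : A.1 ∩ B.1 = ∅) : ¬ (johnsonGraph n 2).Adj A B := by
  rintro ⟨-, h⟩
  rw [hc] at h
  simp at h

end JohnsonAux

/-- For every `n ≥ 5`, every distance-equalizer set of the Johnson graph `J(n,2)` has
cardinality at least `3`; equivalently, `eqdim(J(n,2)) ≥ 3`. -/
theorem johnson_two_eqdim_lower (n : ℕ) (hn : 5 ≤ n) :
    (∀ S : Finset {A : Finset (Fin n) // A.card = 2},
      IsDistanceEqualizerSet (johnsonGraph n 2) ↑S → 3 ≤ S.card) ∧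
    3 ≤ eqdim (johnsonGraph n 2) := by
  have main : ∀ S : Finset {A : Finset (Fin n) // A.card = 2},
      IsDistanceEqualizerSet (johnsonGraph n 2) ↑S → 3 ≤ S.card := by
    intro S hS
    by_contra hlt
    push_neg at hlt
    have hc3 : S.card = 0 ∨ S.card = 1 ∨ S.card = 2 := by omega
    rcases hc3 with h0 | h1 | h2
    · -- empty set
      rw [Finset.card_eq_zero] at h0
      subst h0
      have h01 : (⟨0, by omega⟩ : Fin n) ≠ ⟨1, by omega⟩ := by
        intro h; simpa using congrArg Fin.val h
      have h02 : (⟨0, by omega⟩ : Fin n) ≠ ⟨2, by omega⟩ := by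
        intro h; simpa using congrArg Fin.val h
      have h12 : (⟨1, by omega⟩ : Fin n) ≠ (⟨2, by omega⟩ : Fin n) := by
        intro h; simpa using congrArg Fin.val h
      set u : {A : Finset (Fin n) // A.card = 2} :=
        ⟨{⟨0, by omega⟩, ⟨1, by omega⟩}, Finset.card_pair h01⟩
      set v : {A : Finset (Fin n) // A.card = 2} :=
        ⟨{⟨0, by omega⟩, ⟨2, by omega⟩}, Finset.card_pair h02⟩
      have huv : u ≠ v := by
        intro h
        have : (⟨1, by omega⟩ : Fin n) ∈ v.1 := by
          rw [← h]; simp [u]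
        simp only [v, Finset.mem_insert, Finset.mem_singleton] at this
        exact absurd this (by push_neg; exact ⟨h01.symm, h12⟩)
      obtain ⟨x, hx, -⟩ := hS u v (by simp) (by simp) huv
      simp at hx
    · -- singleton
      rw [Finset.card_eq_one] at h1
      obtain ⟨x, rfl⟩ := h1
      -- pick b ∈ x, and e ≠ f outside x
      obtain ⟨b, hb⟩ : x.1.Nonempty := Finset.card_pos.mp (by rw [x.2]; omega)
      have hcompl : 1 < (x.1ᶜ).card := by
        rw [Finset.card_compl, x.2]
        simp only [Fintype.card_fin]
        omega
      obtain ⟨e, he, f, hf, hef⟩ := Finset.one_lt_card.mp hcompl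
      rw [Finset.mem_compl] at he hf
      have hbe : b ≠ e := fun h => he (h ▸ hb)
      set u : {A : Finset (Fin n) // A.card = 2} := ⟨{b, e}, Finset.card_pair hbe⟩
      set v : {A : Finset (Fin n) // A.card = 2} := ⟨{e, f}, Finset.card_pair hef⟩
      have hux : u ≠ x := by
        intro h
        exact he (by rw [← h]; simp [u])
      have hvx : v ≠ x := by
        intro h
        exact he (by rw [← h]; simp [v])
      have huv : u ≠ v := by
        intro h
        have : b ∈ v.1 := by rw [← h]; simp [u]
        simp only [v, Finset.mem_insert, Finset.mem_singleton] at this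
        rcases this with rfl | rfl
        exacts [he hb, hf hb]
      obtain ⟨z, hz, hd⟩ := hS u v (by simpa using hux) (by simpa using hvx) huv
      simp only [Finset.coe_singleton, Set.mem_singleton_iff] at hz
      subst hz
      refine dist_ne_of_adj_of_not_adj ?_ ?_ hd
      · refine johnson_adj (fun h => hux (Subtype.ext h)) ?_
        rw [show u.1 = {b, e} from rfl, pair_inter_singleton hb he,
          Finset.card_singleton]
      · exact johnson_not_adj (pair_inter_empty he hf)
    · -- two elements
      rw [Finset.card_eq_two] at h2
      obtain ⟨x, y, hxy, rfl⟩ := h2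
      have hxy1 : x.1 ≠ y.1 := fun h => hxy (Subtype.ext h)
      -- b ∈ x \ y, c ∈ y \ x
      obtain ⟨b, hbx, hby⟩ : ∃ b, b ∈ x.1 ∧ b ∉ y.1 := by
        by_contra hcon
        push_neg at hcon
        exact hxy1 (Finset.eq_of_subset_of_card_le hcon (by rw [x.2, y.2]))
      obtain ⟨c, hcy, hcx⟩ : ∃ c, c ∈ y.1 ∧ c ∉ x.1 := by
        by_contra hcon
        push_neg at hcon
        exact hxy1 (Finset.eq_of_subset_of_card_le hcon (by rw [x.2, y.2])).symm
      -- e outside x ∪ y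
      obtain ⟨e, he⟩ : ((x.1 ∪ y.1)ᶜ).Nonempty := by
        rw [← Finset.card_pos, Finset.card_compl]
        have := Finset.card_union_le x.1 y.1
        rw [x.2, y.2] at this
        simp only [Fintype.card_fin]
        omega
      rw [Finset.mem_compl, Finset.mem_union] at he
      push_neg at he
      obtain ⟨hex, hey⟩ := he
      have hbe : b ≠ e := fun h => hex (h ▸ hbx)
      have hce : c ≠ e := fun h => hey (h ▸ hcy)
      have hbc : b ≠ c := fun h => hcx (h ▸ hbx)
      set u : {A : Finset (Fin n) // A.card = 2} := ⟨{b, e}, Finset.card_pair hbe⟩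
      set v : {A : Finset (Fin n) // A.card = 2} := ⟨{c, e}, Finset.card_pair hce⟩
      have hux : u ≠ x := fun h => hex (by rw [← h]; simp [u])
      have huy : u ≠ y := fun h => hby (by rw [← h]; simp [u])
      have hvx : v ≠ x := fun h => hcx (by rw [← h]; simp [v])
      have hvy : v ≠ y := fun h => hey (by rw [← h]; simp [v])
      have huv : u ≠ v := by
        intro h
        have : b ∈ v.1 := by rw [← h]; simp [u]
        simp only [v, Finset.mem_insert, Finset.mem_singleton] at this
        rcases this with rfl | rfl
        exacts [hbc rfl, hbe rfl]
      have hu : u ∉ (↑({x, y} : Finset _) : Set _) := by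
        simp only [Finset.coe_insert, Finset.coe_singleton, Set.mem_insert_iff,
          Set.mem_singleton_iff]
        push_neg
        exact ⟨hux, huy⟩
      have hv : v ∉ (↑({x, y} : Finset _) : Set _) := by
        simp only [Finset.coe_insert, Finset.coe_singleton, Set.mem_insert_iff,
          Set.mem_singleton_iff]
        push_neg
        exact ⟨hvx, hvy⟩
      obtain ⟨z, hz, hd⟩ := hS u v hu hv huv
      simp only [Finset.coe_insert, Finset.coe_singleton, Set.mem_insert_iff,
        Set.mem_singleton_iff] at hz
      rcases hz with rfl | rfl
      · refine dist_ne_of_adj_of_not_adj ?_ ?_ hd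
        · refine johnson_adj (fun h => hux (Subtype.ext h)) ?_
          rw [show u.1 = {b, e} from rfl, pair_inter_singleton hbx hex,
            Finset.card_singleton]
        · exact johnson_not_adj (pair_inter_empty hcx hex)
      · refine dist_ne_of_adj_of_not_adj ?_ ?_ hd.symm
        · refine johnson_adj (fun h => hvy (Subtype.ext h)) ?_
          rw [show v.1 = {c, e} from rfl, pair_inter_singleton hcy hey,
            Finset.card_singleton]
        · exact johnson_not_adj (pair_inter_empty hby hey)
  refine ⟨main, ?_⟩
  have hne : {m | ∃ S : Finset {A : Finset (Fin n) // A.card = 2},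
      IsDistanceEqualizerSet (johnsonGraph n 2) ↑S ∧ S.card = m}.Nonempty := by
    refine ⟨Finset.univ.card, Finset.univ, ?_, rfl⟩
    intro u v hu _ _
    exact absurd (by simp) hu
  obtain ⟨S, hS, hcard⟩ := Nat.sInf_mem hne
  rw [eqdim, ← hcard]
  exact main S hS
end

section
/- For every integer n ≥ 9, the set S = {{1,2,j} : 3 ≤ j ≤ n} (of cardinality n − 2) is a distance-equalizer set of the Johnson graph J(n,3); that is, for every two distinct 3-element subsets X, Y of {1,…,n} with X, Y ∉ S there exists Z ∈ S with d(X,Z) = d(Y,Z) in J(n,3). -/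
section aux

variable {n : ℕ}

lemma johnson3_walk (m : ℕ) : ∀ (A B : {A : Finset (Fin n) // A.card = 3}),
    (A.1 \ B.1).card = m → ∃ p : (johnsonGraph n 3).Walk A B, p.length = m := by
  induction m with
  | zero =>
    intro A B h
    have hsub : A.1 ⊆ B.1 := by
      rw [← Finset.sdiff_eq_empty_iff_subset]
      exact Finset.card_eq_zero.mp h
    have : A = B := Subtype.ext (Finset.eq_of_subset_of_card_le hsub (by omega))
    subst this
    exact ⟨SimpleGraph.Walk.nil, rfl⟩
  | succ m ih =>
    intro A B h
    have hAB : (A.1 \ B.1).Nonempty := Finset.card_pos.mp (by omega)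
    obtain ⟨x, hx⟩ := hAB
    have hBA : (B.1 \ A.1).Nonempty := by
      rw [← Finset.card_pos]
      have := Finset.card_sdiff_add_card_inter A.1 B.1
      have := Finset.card_sdiff_add_card_inter B.1 A.1
      rw [Finset.inter_comm] at this
      omega
    obtain ⟨y, hy⟩ := hBA
    simp only [Finset.mem_sdiff] at hx hy
    have hyx : y ≠ x := fun e => hy.2 (e ▸ hx.1)
    set A' : Finset (Fin n) := insert y (A.1.erase x) with hA'
    have hcardA' : A'.card = 3 := by
      rw [hA', Finset.card_insert_of_notMem (by simp [hy.2, hyx]),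
        Finset.card_erase_of_mem hx.1, A.2]
    have hinter : A.1 ∩ A' = A.1.erase x := by
      rw [hA', Finset.inter_insert_of_notMem hy.2]
      rw [Finset.inter_eq_right.mpr (Finset.erase_subset _ _)]
    have hadj : (johnsonGraph n 3).Adj A ⟨A', hcardA'⟩ := by
      constructor
      · intro e
        have h' : A.1 = A' := congrArg Subtype.val e
        have hx' : x ∈ A' := h' ▸ hx.1
        simp [hA', hyx.symm] at hx'
      · show (A.1 ∩ A').card = 3 - 1
        rw [hinter, Finset.card_erase_of_mem hx.1, A.2]
    have hsd : (A' \ B.1).card = m := by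
      have : A' \ B.1 = (A.1 \ B.1).erase x := by
        rw [hA']
        ext z
        simp only [Finset.mem_sdiff, Finset.mem_insert, Finset.mem_erase]
        constructor
        · rintro ⟨h1 | h1, h2⟩
          · exact absurd (h1 ▸ hy.1) h2
          · exact ⟨h1.1, h1.2, h2⟩
        · rintro ⟨h1, h2, h3⟩
          exact ⟨Or.inr ⟨h1, h2⟩, h3⟩
      rw [this, Finset.card_erase_of_mem (Finset.mem_sdiff.mpr hx), h]
      omega
    obtain ⟨p, hp⟩ := ih ⟨A', hcardA'⟩ B hsd
    exact ⟨SimpleGraph.Walk.cons hadj p, by simp [hp]⟩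

lemma johnson3_walk_lb (A B : {A : Finset (Fin n) // A.card = 3})
    (p : (johnsonGraph n 3).Walk A B) : (A.1 \ B.1).card ≤ p.length := by
  induction p with
  | nil => simp
  | @cons u v w h p ih =>
    have h1 : u.1 \ w.1 ⊆ (v.1 \ w.1) ∪ (u.1 \ v.1) := by
      intro z hz
      simp only [Finset.mem_sdiff, Finset.mem_union] at hz ⊢
      by_cases hv : z ∈ v.1
      · exact Or.inl ⟨hv, hz.2⟩
      · exact Or.inr ⟨hz.1, hv⟩
    have h2 : (u.1 \ v.1).card = 1 := by
      have := Finset.card_sdiff_add_card_inter u.1 v.1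
      have hc : (u.1 ∩ v.1).card = 3 - 1 := h.2
      omega
    calc (u.1 \ w.1).card ≤ (v.1 \ w.1).card + (u.1 \ v.1).card :=
          le_trans (Finset.card_le_card h1) (Finset.card_union_le _ _)
      _ ≤ p.length + 1 := by omega
      _ = (SimpleGraph.Walk.cons h p).length := by simp

lemma johnson3_dist (A B : {A : Finset (Fin n) // A.card = 3}) :
    (johnsonGraph n 3).dist A B = (A.1 \ B.1).card := by
  obtain ⟨p, hp⟩ := johnson3_walk (A.1 \ B.1).card A B rfl
  refine le_antisymm (hp ▸ SimpleGraph.dist_le p) ?_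
  obtain ⟨q, hq⟩ := SimpleGraph.Reachable.exists_walk_length_eq_dist ⟨p⟩
  exact hq ▸ johnson3_walk_lb A B q

end aux

theorem johnson_aux (n : ℕ) (hn : 9 ≤ n) (e0 e1 : Fin n)
    (h0 : (e0 : ℕ) = 0) (h1 : (e1 : ℕ) = 1) :
    IsDistanceEqualizerSet (johnsonGraph n 3)
      {A : {A : Finset (Fin n) // A.card = 3} |
        ∃ j : Fin n, 2 ≤ (j : ℕ) ∧ A.1 = {e0, e1, j}} ∧
    Set.ncard {A : {A : Finset (Fin n) // A.card = 3} |
        ∃ j : Fin n, 2 ≤ (j : ℕ) ∧ A.1 = {e0, e1, j}} = n - 2 := by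
  classical
  have hne01 : e0 ≠ e1 := by intro h; rw [h, h1] at h0; omega
  have hje : ∀ j : Fin n, 2 ≤ (j : ℕ) → j ≠ e0 ∧ j ≠ e1 := by
    intro j hj
    constructor <;> intro h <;> rw [h] at hj <;> omega
  have hje' : ∀ j : Fin n, j ≠ e0 → j ≠ e1 → 2 ≤ (j : ℕ) := by
    intro j hj0 hj1
    by_contra hc
    push_neg at hc
    interval_cases h : (j : ℕ)
    · exact hj0 (Fin.ext (by omega))
    · exact hj1 (Fin.ext (by omega))
  have hcard3 : ∀ j : Fin n, 2 ≤ (j : ℕ) → ({e0, e1, j} : Finset (Fin n)).card = 3 := by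
    intro j hj
    obtain ⟨hj0, hj1⟩ := hje j hj
    rw [Finset.card_insert_of_notMem (by simp [hne01, Ne.symm hj0]),
      Finset.card_insert_of_notMem (by simp [Ne.symm hj1]), Finset.card_singleton]
  have hsplit : ∀ j : Fin n, ({e0, e1, j} : Finset (Fin n)) = {e0, e1} ∪ {j} := by
    intro j; ext z; simp [or_assoc]
  have hinterZ : ∀ (X : Finset (Fin n)) (j : Fin n), j ∉ X →
      X ∩ {e0, e1, j} = X ∩ {e0, e1} := by
    intro X j hj
    rw [hsplit, Finset.inter_union_distrib_left, Finset.inter_singleton_of_notMem hj,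
      Finset.union_empty]
  have hinterZ' : ∀ (X : Finset (Fin n)) (j : Fin n), j ∈ X →
      X ∩ {e0, e1, j} = (X ∩ {e0, e1}) ∪ {j} := by
    intro X j hj
    rw [hsplit, Finset.inter_union_distrib_left, Finset.inter_singleton_of_mem hj]
  have hdisteq : ∀ X Y Z : {A : Finset (Fin n) // A.card = 3},
      (X.1 ∩ Z.1).card = (Y.1 ∩ Z.1).card →
      (johnsonGraph n 3).dist X Z = (johnsonGraph n 3).dist Y Z := by
    intro X Y Z h
    rw [johnson3_dist, johnson3_dist]
    have hx := Finset.card_sdiff_add_card_inter X.1 Z.1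
    have hy := Finset.card_sdiff_add_card_inter Y.1 Z.1
    rw [X.2] at hx
    rw [Y.2] at hy
    omega
  have hc2 : ({e0, e1} : Finset (Fin n)).card = 2 := by
    rw [Finset.card_insert_of_notMem (by simp [hne01]), Finset.card_singleton]
  have hS1 : ∀ X : {A : Finset (Fin n) // A.card = 3},
      ¬(∃ j : Fin n, 2 ≤ (j : ℕ) ∧ X.1 = {e0, e1, j}) → (X.1 ∩ {e0, e1}).card ≤ 1 := by
    intro X hX
    by_contra hcon
    push_neg at hcon
    have heq : X.1 ∩ {e0, e1} = {e0, e1} :=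
      Finset.eq_of_subset_of_card_le Finset.inter_subset_right (by omega)
    have hsub : ({e0, e1} : Finset (Fin n)) ⊆ X.1 := by
      rw [← heq]; exact Finset.inter_subset_left
    have hcd : (X.1 \ {e0, e1}).card = 1 := by
      rw [Finset.card_sdiff_of_subset hsub, X.2, hc2]
    obtain ⟨z, hz⟩ := Finset.card_eq_one.mp hcd
    have hzm : z ∈ X.1 \ ({e0, e1} : Finset (Fin n)) := hz ▸ Finset.mem_singleton_self z
    rw [Finset.mem_sdiff, Finset.mem_insert, Finset.mem_singleton] at hzm
    push_neg at hzm
    have hz2 : 2 ≤ (z : ℕ) := hje' z hzm.2.1 hzm.2.2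
    exact hX ⟨z, hz2, by
      rw [hsplit, ← hz, Finset.union_sdiff_of_subset hsub]⟩
  constructor
  · intro X Y hX hY hXY
    simp only [Set.mem_setOf_eq] at hX hY
    have haX := hS1 X hX
    have haY := hS1 Y hY
    have key : ∀ X Y : {A : Finset (Fin n) // A.card = 3}, X ≠ Y →
        (X.1 ∩ {e0, e1}).card = 0 → (Y.1 ∩ {e0, e1}).card = 1 →
        ∃ x ∈ {A : {A : Finset (Fin n) // A.card = 3} |
          ∃ j : Fin n, 2 ≤ (j : ℕ) ∧ A.1 = {e0, e1, j}},
          (johnsonGraph n 3).dist X x = (johnsonGraph n 3).dist Y x := by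
      intro X Y hXY hA hB
      have hAe : X.1 ∩ {e0, e1} = ∅ := Finset.card_eq_zero.mp hA
      have hXYne : (X.1 \ Y.1).Nonempty := by
        rw [Finset.sdiff_nonempty]
        intro hsub
        exact hXY (Subtype.ext (Finset.eq_of_subset_of_card_le hsub (by rw [X.2, Y.2])))
      obtain ⟨j, hjmem⟩ := hXYne
      rw [Finset.mem_sdiff] at hjmem
      have hj0 : j ≠ e0 := by
        intro h
        have : j ∈ X.1 ∩ ({e0, e1} : Finset (Fin n)) := by
          rw [Finset.mem_inter]
          exact ⟨hjmem.1, by rw [h]; simp⟩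
        rw [hAe] at this
        simp at this
      have hj1 : j ≠ e1 := by
        intro h
        have : j ∈ X.1 ∩ ({e0, e1} : Finset (Fin n)) := by
          rw [Finset.mem_inter]
          exact ⟨hjmem.1, by rw [h]; simp⟩
        rw [hAe] at this
        simp at this
      have hj2 : 2 ≤ (j : ℕ) := hje' j hj0 hj1
      refine ⟨⟨{e0, e1, j}, hcard3 j hj2⟩, ⟨j, hj2, rfl⟩, hdisteq _ _ _ ?_⟩
      show (X.1 ∩ ({e0, e1, j} : Finset (Fin n))).card = (Y.1 ∩ _).card
      rw [hinterZ' X.1 j hjmem.1, hinterZ Y.1 j hjmem.2, hAe, Finset.empty_union,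
        Finset.card_singleton, hB]
    by_cases hab : (X.1 ∩ {e0, e1}).card = (Y.1 ∩ {e0, e1}).card
    · have hex : ∃ j : Fin n, j ∉ X.1 ∪ Y.1 ∪ ({e0, e1} : Finset (Fin n)) := by
        by_contra hc
        push_neg at hc
        have hsub : Finset.univ ⊆ X.1 ∪ Y.1 ∪ ({e0, e1} : Finset (Fin n)) :=
          fun j _ => hc j
        have hcard := Finset.card_le_card hsub
        have hle : (X.1 ∪ Y.1 ∪ ({e0, e1} : Finset (Fin n))).card ≤ 8 := by
          calc (X.1 ∪ Y.1 ∪ ({e0, e1} : Finset (Fin n))).card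
              ≤ (X.1 ∪ Y.1).card + ({e0, e1} : Finset (Fin n)).card :=
                Finset.card_union_le _ _
            _ ≤ X.1.card + Y.1.card + ({e0, e1} : Finset (Fin n)).card := by
                have := Finset.card_union_le X.1 Y.1
                omega
            _ ≤ 8 := by rw [X.2, Y.2, hc2]
        rw [Finset.card_univ, Fintype.card_fin] at hcard
        omega
      obtain ⟨j, hj⟩ := hex
      simp only [Finset.mem_union, Finset.mem_insert, Finset.mem_singleton, not_or] at hj
      obtain ⟨⟨hjX, hjY⟩, hj0, hj1⟩ := hj
      have hj2 : 2 ≤ (j : ℕ) := hje' j hj0 hj1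
      refine ⟨⟨{e0, e1, j}, hcard3 j hj2⟩, ⟨j, hj2, rfl⟩, hdisteq _ _ _ ?_⟩
      show (X.1 ∩ ({e0, e1, j} : Finset (Fin n))).card = (Y.1 ∩ _).card
      rw [hinterZ X.1 j hjX, hinterZ Y.1 j hjY, hab]
    · have hcases : (X.1 ∩ {e0, e1}).card = 0 ∧ (Y.1 ∩ {e0, e1}).card = 1 ∨
          (X.1 ∩ {e0, e1}).card = 1 ∧ (Y.1 ∩ {e0, e1}).card = 0 := by omega
      rcases hcases with ⟨hA, hB⟩ | ⟨hA, hB⟩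
      · exact key X Y hXY hA hB
      · obtain ⟨Z, hZ1, hZ2⟩ := key Y X (Ne.symm hXY) hB hA
        exact ⟨Z, hZ1, hZ2.symm⟩
  · have hTc : (Finset.univ.filter (fun j : Fin n => 2 ≤ (j : ℕ))).card = n - 2 := by
      have h := Finset.card_filter_add_card_filter_not
        (s := (Finset.univ : Finset (Fin n))) (p := fun j : Fin n => 2 ≤ (j : ℕ))
      have hneg : Finset.univ.filter (fun j : Fin n => ¬2 ≤ (j : ℕ)) =
          ({e0, e1} : Finset (Fin n)) := by
        ext z
        simp only [Finset.mem_filter, Finset.mem_univ, true_and, not_le,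
          Finset.mem_insert, Finset.mem_singleton]
        constructor
        · intro hz
          interval_cases h : (z : ℕ)
          · exact Or.inl (Fin.ext (by omega))
          · exact Or.inr (Fin.ext (by omega))
        · rintro (rfl | rfl) <;> omega
      rw [hneg, hc2, Finset.card_univ, Fintype.card_fin] at h
      omega
    have h2n : (2 : ℕ) < n := by omega
    set jf : Fin n := ⟨2, h2n⟩ with hjf
    have hjf2 : 2 ≤ (jf : ℕ) := le_refl 2
    set F : Fin n → {A : Finset (Fin n) // A.card = 3} := fun j =>
      if h : 2 ≤ (j : ℕ) then ⟨{e0, e1, j}, hcard3 j h⟩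
      else ⟨{e0, e1, jf}, hcard3 jf hjf2⟩ with hF
    have himg : {A : {A : Finset (Fin n) // A.card = 3} |
        ∃ j : Fin n, 2 ≤ (j : ℕ) ∧ A.1 = {e0, e1, j}} =
        F '' {j : Fin n | 2 ≤ (j : ℕ)} := by
      ext A
      simp only [Set.mem_setOf_eq, Set.mem_image]
      constructor
      · rintro ⟨j, hj, hA⟩
        exact ⟨j, hj, by rw [hF]; simp only [dif_pos hj]; exact (Subtype.ext hA.symm)⟩
      · rintro ⟨j, hj, hFj⟩
        rw [hF] at hFj
        simp only [dif_pos hj] at hFj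
        exact ⟨j, hj, (congrArg Subtype.val hFj).symm⟩
    have hinj : Set.InjOn F {j : Fin n | 2 ≤ (j : ℕ)} := by
      intro j hj j' hj' hEq
      simp only [Set.mem_setOf_eq] at hj hj'
      rw [hF] at hEq
      simp only [dif_pos hj, dif_pos hj'] at hEq
      have h' : ({e0, e1, j} : Finset (Fin n)) = {e0, e1, j'} :=
        congrArg Subtype.val hEq
      have hjm : j ∈ ({e0, e1, j'} : Finset (Fin n)) := by rw [← h']; simp
      obtain ⟨hja, hjb⟩ := hje j hj
      simp only [Finset.mem_insert, Finset.mem_singleton] at hjm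
      rcases hjm with h | h | h
      · exact absurd h hja
      · exact absurd h hjb
      · exact h
    rw [himg, Set.ncard_image_of_injOn hinj]
    have hseteq : {j : Fin n | 2 ≤ (j : ℕ)} =
        ↑(Finset.univ.filter (fun j : Fin n => 2 ≤ (j : ℕ))) := by
      ext j; simp
    rw [hseteq, Set.ncard_coe_finset, hTc]


/-- For every `n ≥ 9`, the set `S = {{1,2,j} : 3 ≤ j ≤ n}` (realized in `Fin n` as the sets
`{0,1,j}` with `j ≥ 2`), of cardinality `n - 2`, is a distance-equalizer set of `J(n,3)`. -/
theorem johnson_three_distanceEqualizer (n : ℕ) (hn : 9 ≤ n) :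
    IsDistanceEqualizerSet (johnsonGraph n 3)
      {A : {A : Finset (Fin n) // A.card = 3} |
        ∃ j : Fin n, 2 ≤ (j : ℕ) ∧ A.1 = {⟨0, by omega⟩, ⟨1, by omega⟩, j}} ∧
    Set.ncard {A : {A : Finset (Fin n) // A.card = 3} |
        ∃ j : Fin n, 2 ≤ (j : ℕ) ∧ A.1 = {⟨0, by omega⟩, ⟨1, by omega⟩, j}} = n - 2 :=
  johnson_aux n hn ⟨0, by omega⟩ ⟨1, by omega⟩ rfl rfl
end

section
/- For every odd integer k ≥ 3, every distance-equalizer set of the Johnson graph J(2k,k) has cardinality at least (1/2)·C(2k,k), where C(2k,k) is the binomial coefficient. -/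
section JohnsonAux

variable {n k : ℕ}

private lemma johnson_reach_dist_le : ∀ (m : ℕ) (A B : {A : Finset (Fin n) // A.card = k}),
    (A.1 \ B.1).card = m →
    (johnsonGraph n k).Reachable A B ∧ (johnsonGraph n k).dist A B ≤ m := by
  intro m
  induction m with
  | zero =>
    intro A B h
    have hsub : A.1 ⊆ B.1 := by
      rw [← Finset.sdiff_eq_empty_iff_subset]
      exact Finset.card_eq_zero.mp h
    have hAB : A = B := Subtype.ext (Finset.eq_of_subset_of_card_le hsub (by rw [A.2, B.2]))
    subst hAB
    exact ⟨SimpleGraph.Reachable.refl _, by simp⟩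
  | succ m ih =>
    intro A B h
    obtain ⟨a, ha⟩ : (A.1 \ B.1).Nonempty := by
      rw [← Finset.card_pos, h]; omega
    obtain ⟨b, hb⟩ : (B.1 \ A.1).Nonempty := by
      rw [← Finset.card_pos, ← Finset.card_sdiff_comm (by rw [A.2, B.2]), h]; omega
    rw [Finset.mem_sdiff] at ha hb
    have hk1 : 1 ≤ k := by
      rw [← A.2]; exact Finset.card_pos.mpr ⟨a, ha.1⟩
    have hbe : b ∉ A.1.erase a := fun hc => hb.2 (Finset.mem_of_mem_erase hc)
    have hcard : (insert b (A.1.erase a)).card = k := by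
      rw [Finset.card_insert_of_notMem hbe, Finset.card_erase_of_mem ha.1, A.2]
      omega
    set A' : {A : Finset (Fin n) // A.card = k} := ⟨insert b (A.1.erase a), hcard⟩ with hA'
    have hinter : A.1 ∩ A'.1 = A.1.erase a := by
      ext x
      simp only [hA', Finset.mem_inter, Finset.mem_insert, Finset.mem_erase]
      constructor
      · rintro ⟨hxA, hx⟩
        rcases hx with rfl | hx
        · exact absurd hxA hb.2
        · exact ⟨hx.1, hxA⟩
      · rintro ⟨hxa, hxA⟩
        exact ⟨hxA, Or.inr ⟨hxa, hxA⟩⟩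
    have hadj : (johnsonGraph n k).Adj A A' := by
      refine ⟨fun hc => ?_, by rw [hinter, Finset.card_erase_of_mem ha.1, A.2]⟩
      apply hb.2
      rw [hc]
      exact Finset.mem_insert_self _ _
    have hdiff : (A'.1 \ B.1).card = m := by
      have : A'.1 \ B.1 = (A.1 \ B.1).erase a := by
        ext x
        simp only [hA', Finset.mem_sdiff, Finset.mem_insert, Finset.mem_erase]
        constructor
        · rintro ⟨hx, hxB⟩
          rcases hx with rfl | hx
          · exact absurd hb.1 hxB
          · exact ⟨hx.1, hx.2, hxB⟩
        · rintro ⟨hxa, hxA, hxB⟩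
          exact ⟨Or.inr ⟨hxa, hxA⟩, hxB⟩
      rw [this, Finset.card_erase_of_mem (Finset.mem_sdiff.mpr ha), h]
      omega
    obtain ⟨hreach, hdist⟩ := ih A' B hdiff
    obtain ⟨p, hp⟩ := hreach.exists_walk_length_eq_dist
    refine ⟨(SimpleGraph.Walk.cons hadj p).reachable, ?_⟩
    calc (johnsonGraph n k).dist A B ≤ (SimpleGraph.Walk.cons hadj p).length :=
          SimpleGraph.dist_le _
      _ = p.length + 1 := by simp
      _ ≤ m + 1 := by omega

private lemma johnson_card_le_walk (A B : {A : Finset (Fin n) // A.card = k})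
    (p : (johnsonGraph n k).Walk A B) : (A.1 \ B.1).card ≤ p.length := by
  induction p with
  | nil => simp
  | @cons u v w hadj p ih =>
    obtain ⟨hne, hinter⟩ := id hadj
    have hk1 : 1 ≤ k := by
      by_contra hc
      apply hne
      have h0 : k = 0 := by omega
      have hu : u.1 = ∅ := Finset.card_eq_zero.mp (by rw [u.2, h0])
      have hv : v.1 = ∅ := Finset.card_eq_zero.mp (by rw [v.2, h0])
      exact Subtype.ext (hu.trans hv.symm)
    have h1 : (u.1 \ v.1).card = 1 := by
      have := Finset.card_sdiff_add_card_inter u.1 v.1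
      rw [hinter, u.2] at this
      omega
    have hsub : u.1 \ w.1 ⊆ (u.1 \ v.1) ∪ (v.1 \ w.1) := by
      intro x hx
      rw [Finset.mem_sdiff] at hx
      rw [Finset.mem_union, Finset.mem_sdiff, Finset.mem_sdiff]
      by_cases hxv : x ∈ v.1
      · exact Or.inr ⟨hxv, hx.2⟩
      · exact Or.inl ⟨hx.1, hxv⟩
    calc (u.1 \ w.1).card ≤ ((u.1 \ v.1) ∪ (v.1 \ w.1)).card := Finset.card_le_card hsub
      _ ≤ (u.1 \ v.1).card + (v.1 \ w.1).card := Finset.card_union_le _ _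
      _ ≤ 1 + p.length := by omega
      _ = (SimpleGraph.Walk.cons hadj p).length := by
            rw [SimpleGraph.Walk.length_cons]; omega

private lemma johnson_dist_eq (A B : {A : Finset (Fin n) // A.card = k}) :
    (johnsonGraph n k).dist A B = (A.1 \ B.1).card := by
  obtain ⟨hreach, hle⟩ := johnson_reach_dist_le (A.1 \ B.1).card A B rfl
  obtain ⟨p, hp⟩ := hreach.exists_walk_length_eq_dist
  have := johnson_card_le_walk A B p
  omega

end JohnsonAux

/-- For every odd `k ≥ 3`, every distance-equalizer set of the Johnson graph `J(2k,k)` has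
cardinality at least half the central binomial coefficient `C(2k,k)`. -/
theorem johnson_twok_k_eqdim_lower (k : ℕ) (hk : 3 ≤ k) (hodd : Odd k)
    (S : Finset {A : Finset (Fin (2 * k)) // A.card = k})
    (hS : IsDistanceEqualizerSet (johnsonGraph (2 * k) k) ↑S) :
    Nat.choose (2 * k) k / 2 ≤ S.card := by
  classical
  have hcardFin : Fintype.card (Fin (2 * k)) = 2 * k := Fintype.card_fin _
  -- complement map
  have hgc : ∀ A : {A : Finset (Fin (2 * k)) // A.card = k}, (A.1ᶜ).card = k := by
    intro A
    rw [Finset.card_compl, A.2, hcardFin]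
    omega
  set g : {A : Finset (Fin (2 * k)) // A.card = k} → {A : Finset (Fin (2 * k)) // A.card = k} := fun A => ⟨A.1ᶜ, hgc A⟩ with hg
  have hginv : ∀ A : {A : Finset (Fin (2 * k)) // A.card = k}, g (g A) = A := by
    intro A
    apply Subtype.ext
    simp [hg]
  -- every complementary pair meets S
  have hcov : ∀ A : {A : Finset (Fin (2 * k)) // A.card = k}, A ∈ S ∨ g A ∈ S := by
    intro A
    by_contra hc
    push_neg at hc
    have hne : A ≠ g A := by
      intro hEq
      have hv : A.1 = A.1ᶜ := congrArg Subtype.val hEq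
      obtain ⟨a, haA⟩ : A.1.Nonempty := Finset.card_pos.mp (by rw [A.2]; omega)
      exact Finset.mem_compl.mp (hv ▸ haA) haA
    obtain ⟨x, hxS, hxdist⟩ := hS A (g A) (by simpa using hc.1) (by simpa using hc.2) hne
    rw [johnson_dist_eq, johnson_dist_eq] at hxdist
    have hsum : (A.1 \ x.1).card + ((g A).1 \ x.1).card = k := by
      have hdisj : Disjoint (A.1 \ x.1) ((g A).1 \ x.1) := by
        apply Finset.disjoint_left.mpr
        intro a ha hb
        rw [Finset.mem_sdiff] at ha hb
        exact (Finset.mem_compl.mp hb.1) ha.1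
      have hunion : (A.1 \ x.1) ∪ ((g A).1 \ x.1) = x.1ᶜ := by
        ext a
        simp only [Finset.mem_union, Finset.mem_sdiff, Finset.mem_compl, hg]
        by_cases haA : a ∈ A.1 <;> by_cases hax : a ∈ x.1 <;> simp [haA, hax]
      rw [← Finset.card_union_of_disjoint hdisj, hunion, Finset.card_compl, x.2, hcardFin]
      omega
    obtain ⟨m, hm⟩ := hodd
    omega
  -- counting
  set f : {A : Finset (Fin (2 * k)) // A.card = k} → {A : Finset (Fin (2 * k)) // A.card = k} := fun A => if A ∈ S then A else g A with hf
  have hmaps : ∀ A ∈ (Finset.univ : Finset {A : Finset (Fin (2 * k)) // A.card = k}), f A ∈ S := by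
    intro A _
    by_cases hA : A ∈ S
    · simpa [hf, hA]
    · simpa [hf, hA] using (hcov A).resolve_left hA
  have hfib : ∀ b ∈ S, ((Finset.univ : Finset {A : Finset (Fin (2 * k)) // A.card = k}).filter fun A => f A = b).card ≤ 2 := by
    intro b _
    have hsub : ((Finset.univ : Finset {A : Finset (Fin (2 * k)) // A.card = k}).filter fun A => f A = b) ⊆ {b, g b} := by
      intro A hA
      rw [Finset.mem_filter] at hA
      have hfA := hA.2
      by_cases hAS : A ∈ S
      · simp only [hf, if_pos hAS] at hfA
        simp [hfA]
      · simp only [hf, if_neg hAS] at hfA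
        have : A = g b := by rw [← hfA, hginv]
        simp [this]
    calc _ ≤ ({b, g b} : Finset {A : Finset (Fin (2 * k)) // A.card = k}).card := Finset.card_le_card hsub
      _ ≤ 2 := Finset.card_insert_le _ _ |>.trans (by simp)
  have hbound := Finset.card_le_mul_card_image_of_maps_to hmaps 2 hfib
  have huniv : (Finset.univ : Finset {A : Finset (Fin (2 * k)) // A.card = k}).card = Nat.choose (2 * k) k := by
    rw [Finset.card_univ]
    rw [Fintype.card_finset_len, hcardFin]
  omega
end

section
/- Let k ≥ 3 be an odd integer and let P1 = {X ⊆ {1,…,2k} : |X| = k and |X ∩ {1,…,k}| > |X ∩ {k+1,…,2k}|}. Then P1 is a distance-equalizer set of the Johnson graph J(2k,k) and |P1| = (1/2)·C(2k,k), where C(2k,k) is the binomial coefficient. -/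
section dist
variable {n k : ℕ}

lemma jg_walk_le {A B : {A : Finset (Fin n) // A.card = k}}
    (p : (johnsonGraph n k).Walk A B) : k - (A.1 ∩ B.1).card ≤ p.length := by
  induction p with
  | @nil u => simp [Finset.inter_self, u.2]
  | @cons X Y Z h q ih =>
    obtain ⟨hne, hcard⟩ := id h
    have h1 : (Y.1 ∩ Z.1).card ≤ (X.1 ∩ Z.1).card + 1 := by
      calc (Y.1 ∩ Z.1).card
          = (Y.1 ∩ Z.1 ∩ X.1).card + ((Y.1 ∩ Z.1) \ X.1).card :=
            (Finset.card_inter_add_card_sdiff _ _).symm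
        _ ≤ (X.1 ∩ Z.1).card + (Y.1 \ X.1).card := by
            refine Nat.add_le_add ?_ ?_ <;>
              exact Finset.card_le_card (by
                intro i hi
                simp only [Finset.mem_inter, Finset.mem_sdiff] at hi ⊢
                tauto)
        _ ≤ (X.1 ∩ Z.1).card + 1 := by
            refine Nat.add_le_add_left ?_ _
            have := Finset.card_sdiff_add_card_inter Y.1 X.1
            rw [Finset.inter_comm] at hcard
            rw [Y.2] at this
            omega
    simp only [SimpleGraph.Walk.length_cons]
    omega

lemma jg_exists_walk (A B : {A : Finset (Fin n) // A.card = k}) :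
    ∃ p : (johnsonGraph n k).Walk A B, p.length = k - (A.1 ∩ B.1).card := by
  obtain ⟨d, hd⟩ : ∃ d, k - (A.1 ∩ B.1).card = d := ⟨_, rfl⟩
  induction d generalizing A with
  | zero =>
    have hc : k ≤ (A.1 ∩ B.1).card := by omega
    have h1 : A.1 ∩ B.1 = A.1 :=
      Finset.eq_of_subset_of_card_le Finset.inter_subset_left (by rw [A.2]; exact hc)
    have hAB : A.1 ⊆ B.1 := by
      intro i hi
      rw [← h1] at hi
      exact (Finset.mem_inter.1 hi).2
    have : A = B :=
      Subtype.ext (Finset.eq_of_subset_of_card_le hAB (le_of_eq (B.2.trans A.2.symm)))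
    subst this
    exact ⟨SimpleGraph.Walk.nil, by simp [Finset.inter_self, A.2]⟩
  | succ d ih =>
    have hne : A.1 ≠ B.1 := by
      intro h
      rw [h, Finset.inter_self, B.2] at hd
      omega
    obtain ⟨a, ha⟩ : (A.1 \ B.1).Nonempty := by
      rw [Finset.sdiff_nonempty]
      intro hsub
      exact hne (Finset.eq_of_subset_of_card_le hsub (by rw [A.2, B.2]))
    obtain ⟨b, hb⟩ : (B.1 \ A.1).Nonempty := by
      rw [Finset.sdiff_nonempty]
      intro hsub
      exact hne (Finset.eq_of_subset_of_card_le hsub (by rw [A.2, B.2])).symm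
    simp only [Finset.mem_sdiff] at ha hb
    have haA : a ∈ A.1 := ha.1
    have hbA : b ∉ A.1 := hb.2
    have hk1 : 1 ≤ k := by
      by_contra h
      have : k = 0 := by omega
      subst this
      exact hbA (by rw [Finset.card_eq_zero.1 B.2] at hb; exact absurd hb.1 (by simp)) |>.elim
    set A' : {A : Finset (Fin n) // A.card = k} :=
      ⟨insert b (A.1.erase a), by
        rw [Finset.card_insert_of_notMem (by simp [hbA]), Finset.card_erase_of_mem haA, A.2]
        omega⟩ with hA'
    have hadj : (johnsonGraph n k).Adj A A' := by
      constructor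
      · intro h
        apply hbA
        rw [h]
        exact Finset.mem_insert_self _ _
      · have : A.1 ∩ A'.1 = A.1.erase a := by
          rw [hA']
          show A.1 ∩ insert b (A.1.erase a) = A.1.erase a
          rw [Finset.inter_insert_of_notMem hbA]
          exact Finset.inter_eq_right.2 (Finset.erase_subset _ _)
        rw [this, Finset.card_erase_of_mem haA, A.2]
    have hinter : (A'.1 ∩ B.1).card = (A.1 ∩ B.1).card + 1 := by
      have h1 : A'.1 ∩ B.1 = insert b (A.1 ∩ B.1) := by
        show insert b (A.1.erase a) ∩ B.1 = _
        rw [Finset.insert_inter_of_mem hb.1]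
        congr 1
        rw [Finset.erase_inter, Finset.erase_eq_of_notMem (by simp [ha.2])]
      rw [h1, Finset.card_insert_of_notMem (by simp [hbA])]
    obtain ⟨q, hq⟩ := ih A' (by rw [hinter]; omega)
    refine ⟨SimpleGraph.Walk.cons hadj q, ?_⟩
    rw [SimpleGraph.Walk.length_cons, hq, hinter]
    omega

lemma jg_dist_eq (A B : {A : Finset (Fin n) // A.card = k}) :
    (johnsonGraph n k).dist A B = k - (A.1 ∩ B.1).card := by
  obtain ⟨p, hp⟩ := jg_exists_walk A B
  refine le_antisymm (hp ▸ SimpleGraph.dist_le p) ?_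
  obtain ⟨q, hq⟩ := SimpleGraph.Reachable.exists_walk_length_eq_dist ⟨p⟩
  exact hq ▸ jg_walk_le q

end dist


section key
variable {k : ℕ}

/-- Key construction: given two "non-lower-heavy" k-sets u, v with lower-count of u ≤ that of v,
produce a lower-heavy k-set x with |x∩u| = |x∩v|. -/
lemma key_construction (hk3 : 3 ≤ k) (u v : Finset (Fin (2*k)))
    (hu : u.card = k) (hv : v.card = k)
    (hua : 2 * (u.filter (fun i : Fin (2*k) => (i : ℕ) < k)).card < k)
    (hvb : 2 * (v.filter (fun i : Fin (2*k) => (i : ℕ) < k)).card < k)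
    (hab : (u.filter (fun i : Fin (2*k) => (i : ℕ) < k)).card ≤
           (v.filter (fun i : Fin (2*k) => (i : ℕ) < k)).card) :
    ∃ x : Finset (Fin (2*k)), x.card = k ∧
      k < 2 * (x.filter (fun i : Fin (2*k) => (i : ℕ) < k)).card ∧
      (x ∩ u).card = (x ∩ v).card := by
  set P : Fin (2*k) → Prop := fun i => (i : ℕ) < k with hP
  set a := (u.filter P).card with hha
  set b := (v.filter P).card with hhb
  set d := b - a with hhd
  set t := d / 2 with hht
  set r := d % 2 with hhr
  have htr : 2 * t + r = d := by rw [hht, hhr]; omega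
  have hr1 : r ≤ 1 := by rw [hhr]; omega
  set L : Finset (Fin (2*k)) := Finset.univ.filter P with hL
  -- card of L
  have hLcard : L.card = k := by
    have : L = (Finset.univ : Finset (Fin k)).image
        (fun j : Fin k => (⟨(j : ℕ), by omega⟩ : Fin (2*k))) := by
      ext i
      simp only [hL, Finset.mem_filter, Finset.mem_univ, true_and, Finset.mem_image, hP]
      constructor
      · intro hi; exact ⟨⟨(i : ℕ), hi⟩, by simp⟩
      · rintro ⟨j, _, rfl⟩; exact j.2
    rw [this, Finset.card_image_of_injective _ (fun x y hxy => by
      simpa [Fin.ext_iff] using hxy), Finset.card_univ, Fintype.card_fin]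
  -- u, v filter complements
  have hucompl : (u.filter (fun i => ¬ P i)).card = k - a := by
    have := Finset.card_filter_add_card_filter_not (s := u) (p := P)
    rw [hu] at this; omega
  have hvcompl : (v.filter (fun i => ¬ P i)).card = k - b := by
    have := Finset.card_filter_add_card_filter_not (s := v) (p := P)
    rw [hv] at this; omega
  -- basic facts
  have hak : 2 * a < k := hua
  have hbk : 2 * b < k := hvb
  -- choose R ⊆ (v \ u).filter P with card t
  have h1 : t ≤ ((v \ u).filter P).card := by
    have hsub : (v.filter P) \ (u.filter P) ⊆ (v \ u).filter P := by
      intro i hi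
      simp only [Finset.mem_sdiff, Finset.mem_filter] at hi ⊢
      tauto
    have h2 := Finset.le_card_sdiff (u.filter P) (v.filter P)
    have h3 := Finset.card_le_card hsub
    omega
  obtain ⟨R, hR1, hR2⟩ := Finset.exists_subset_card_eq h1
  -- choose R0 ⊆ L \ (u ∪ v) with card r
  have h2 : r ≤ (L \ (u ∪ v)).card := by
    have hsub : L ∩ (u ∪ v) ⊆ (u.filter P) ∪ (v.filter P) := by
      intro i hi
      simp only [hL, Finset.mem_inter, Finset.mem_filter, Finset.mem_union,
        Finset.mem_univ, true_and] at hi ⊢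
      tauto
    have h3 := Finset.card_inter_add_card_sdiff L (u ∪ v)
    have h4 := Finset.card_le_card hsub
    have h5 := Finset.card_union_le (u.filter P) (v.filter P)
    omega
  obtain ⟨R0, hR01, hR02⟩ := Finset.exists_subset_card_eq h2
  -- choose A ⊆ (u \ v).filter ¬P with card t + r
  have h3 : t + r ≤ ((u \ v).filter (fun i => ¬ P i)).card := by
    have hsub : (u.filter (fun i => ¬ P i)) \ (v.filter (fun i => ¬ P i)) ⊆
        (u \ v).filter (fun i => ¬ P i) := by
      intro i hi
      simp only [Finset.mem_sdiff, Finset.mem_filter] at hi ⊢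
      tauto
    have h4 := Finset.le_card_sdiff (v.filter (fun i => ¬ P i)) (u.filter (fun i => ¬ P i))
    have h5 := Finset.card_le_card hsub
    omega
  obtain ⟨A, hA1, hA2⟩ := Finset.exists_subset_card_eq h3
  -- membership facts
  have hRfacts : ∀ i ∈ R, i ∈ v ∧ i ∉ u ∧ P i := by
    intro i hi
    have := hR1 hi
    simp only [Finset.mem_filter, Finset.mem_sdiff] at this
    tauto
  have hR0facts : ∀ i ∈ R0, i ∉ u ∧ i ∉ v ∧ P i := by
    intro i hi
    have := hR01 hi
    simp only [hL, Finset.mem_sdiff, Finset.mem_filter, Finset.mem_union,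
      Finset.mem_univ, true_and] at this
    tauto
  have hAfacts : ∀ i ∈ A, i ∈ u ∧ i ∉ v ∧ ¬ P i := by
    intro i hi
    have := hA1 hi
    simp only [Finset.mem_filter, Finset.mem_sdiff] at this
    tauto
  have hRR0L : R ∪ R0 ⊆ L := by
    intro i hi
    simp only [Finset.mem_union] at hi
    simp only [hL, Finset.mem_filter, Finset.mem_univ, true_and]
    rcases hi with hi | hi
    · exact (hRfacts i hi).2.2
    · exact (hR0facts i hi).2.2
  have hRR0disj : Disjoint R R0 := by
    rw [Finset.disjoint_left]
    intro i hi hi0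
    exact (hR0facts i hi0).2.1 (hRfacts i hi).1
  have hRR0card : (R ∪ R0).card = t + r := by
    rw [Finset.card_union_of_disjoint hRR0disj, hR2, hR02]
  -- the set x
  set x := (L \ (R ∪ R0)) ∪ A with hx
  have hAdisjL : Disjoint (L \ (R ∪ R0)) A := by
    rw [Finset.disjoint_right]
    intro i hi hiL
    simp only [hL, Finset.mem_sdiff, Finset.mem_filter, Finset.mem_univ, true_and] at hiL
    exact (hAfacts i hi).2.2 hiL.1
  have htrk : t + r ≤ k := by omega
  have hxcard : x.card = k := by
    rw [hx, Finset.card_union_of_disjoint hAdisjL, Finset.card_sdiff_of_subset hRR0L, hLcard, hRR0card, hA2]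
    omega
  have hxfilter : x.filter P = L \ (R ∪ R0) := by
    rw [hx, Finset.filter_union]
    have e1 : (L \ (R ∪ R0)).filter P = L \ (R ∪ R0) := by
      rw [Finset.filter_eq_self]
      intro i hi
      simp only [hL, Finset.mem_sdiff, Finset.mem_filter, Finset.mem_univ, true_and] at hi
      exact hi.1
    have e2 : A.filter P = ∅ := by
      rw [Finset.filter_eq_empty_iff]
      intro i hi
      exact (hAfacts i hi).2.2
    rw [e1, e2, Finset.union_empty]
  have hxlow : (x.filter P).card = k - (t + r) := by
    rw [hxfilter, Finset.card_sdiff_of_subset hRR0L, hLcard, hRR0card]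
  -- x ∩ u
  have hLu : L ∩ u = u.filter P := by
    ext i
    simp only [hL, Finset.mem_inter, Finset.mem_filter, Finset.mem_univ, true_and]
    tauto
  have hxu : x ∩ u = (u.filter P) ∪ A := by
    rw [hx, Finset.union_inter_distrib_right]
    congr 1
    · ext i
      simp only [Finset.mem_inter, Finset.mem_sdiff, Finset.mem_union, hL,
        Finset.mem_filter, Finset.mem_univ, true_and]
      constructor
      · rintro ⟨⟨hiP, hiRR0⟩, hiu⟩
        exact ⟨hiu, hiP⟩
      · rintro ⟨hiu, hiP⟩
        refine ⟨⟨hiP, ?_⟩, hiu⟩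
        rintro (h | h)
        · exact (hRfacts i h).2.1 hiu
        · exact (hR0facts i h).1 hiu
    · exact Finset.inter_eq_left.2 (fun i hi => (hAfacts i hi).1)
  have hxucard : (x ∩ u).card = a + (t + r) := by
    rw [hxu, Finset.card_union_of_disjoint, hA2]
    rw [Finset.disjoint_left]
    intro i hi hiA
    exact (hAfacts i hiA).2.2 (Finset.mem_filter.1 hi).2
  -- x ∩ v
  have hLv : L ∩ v = v.filter P := by
    ext i
    simp only [hL, Finset.mem_inter, Finset.mem_filter, Finset.mem_univ, true_and]
    tauto
  have hxv : x ∩ v = (v.filter P) \ R := by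
    rw [hx, Finset.union_inter_distrib_right]
    have e2 : A ∩ v = ∅ := by
      rw [Finset.eq_empty_iff_forall_notMem]
      intro i hi
      simp only [Finset.mem_inter] at hi
      exact (hAfacts i hi.1).2.1 hi.2
    rw [e2, Finset.union_empty]
    ext i
    simp only [Finset.mem_inter, Finset.mem_sdiff, Finset.mem_union, hL,
      Finset.mem_filter, Finset.mem_univ, true_and]
    constructor
    · rintro ⟨⟨hiP, hiRR0⟩, hiv⟩
      exact ⟨⟨hiv, hiP⟩, fun h => hiRR0 (Or.inl h)⟩
    · rintro ⟨⟨hiv, hiP⟩, hiR⟩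
      refine ⟨⟨hiP, ?_⟩, hiv⟩
      rintro (h | h)
      · exact hiR h
      · exact (hR0facts i h).2.1 hiv
  have hRsubvP : R ⊆ v.filter P := by
    intro i hi
    simp only [Finset.mem_filter]
    exact ⟨(hRfacts i hi).1, (hRfacts i hi).2.2⟩
  have hxvcard : (x ∩ v).card = b - t := by
    rw [hxv, Finset.card_sdiff_of_subset hRsubvP, hR2]
  refine ⟨x, hxcard, ?_, ?_⟩
  · show k < 2 * (x.filter P).card
    rw [hxlow]
    omega
  · rw [hxucard, hxvcard]
    omega

end key


section count
variable {k : ℕ}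

lemma swap_def (hk : 0 < k) (i : Fin (2*k)) :
    ((i + (⟨k, by omega⟩ : Fin (2*k))) : Fin (2*k)).val =
      if (i : ℕ) < k then (i : ℕ) + k else (i : ℕ) - k := by
  have h2 : (i : ℕ) < 2*k := i.2
  rw [Fin.val_add]
  simp only
  split
  · next h => exact Nat.mod_eq_of_lt (by omega)
  · next h =>
    rw [Nat.mod_eq_sub_mod (by omega), Nat.mod_eq_of_lt (by omega)]
    omega

lemma swap_swap (hk : 0 < k) (i : Fin (2*k)) :
    (i + (⟨k, by omega⟩ : Fin (2*k))) + (⟨k, by omega⟩ : Fin (2*k)) = i := by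
  have h2 : (i : ℕ) < 2*k := i.2
  apply Fin.ext
  rw [swap_def hk, swap_def hk]
  split_ifs <;> omega

lemma swap_lt_iff (hk : 0 < k) (i : Fin (2*k)) :
    ((i + (⟨k, by omega⟩ : Fin (2*k))) : Fin (2*k)).val < k ↔ ¬ ((i : ℕ) < k) := by
  have h2 : (i : ℕ) < 2*k := i.2
  rw [swap_def hk]
  split_ifs <;> omega

lemma count_half (hk3 : 3 ≤ k) (hodd : Odd k) :
    Set.ncard {X : {A : Finset (Fin (2*k)) // A.card = k} |
        (X.1.filter (fun i : Fin (2*k) => (i : ℕ) < k)).card >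
        (X.1.filter (fun i : Fin (2*k) => k ≤ (i : ℕ))).card}
      = Nat.choose (2*k) k / 2 := by
  classical
  have hk : 0 < k := by omega
  set c : Fin (2*k) := ⟨k, by omega⟩ with hc
  set p : {A : Finset (Fin (2*k)) // A.card = k} → Prop := fun X =>
    (X.1.filter (fun i : Fin (2*k) => (i : ℕ) < k)).card >
    (X.1.filter (fun i : Fin (2*k) => k ≤ (i : ℕ))).card with hp
  have hncard : Set.ncard {X | p X} = (Finset.univ.filter p).card := by
    rw [Set.ncard_eq_toFinset_card', Set.toFinset_setOf]
  rw [hncard]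
  -- sum of the two filters
  have hsum : ∀ X : {A : Finset (Fin (2*k)) // A.card = k},
      (X.1.filter (fun i : Fin (2*k) => (i : ℕ) < k)).card +
      (X.1.filter (fun i : Fin (2*k) => k ≤ (i : ℕ))).card = k := by
    intro X
    have h1 : (X.1.filter (fun i : Fin (2*k) => k ≤ (i : ℕ))) =
        (X.1.filter (fun i : Fin (2*k) => ¬ ((i : ℕ) < k))) := by
      apply Finset.filter_congr
      intro i _
      simp [not_lt]
    rw [h1]
    rw [Finset.card_filter_add_card_filter_not, X.2]
  have hinj : Function.Injective (fun i : Fin (2*k) => i + c) := by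
    intro i j hij
    have := congrArg (fun z : Fin (2*k) => z + c) hij
    simpa [swap_swap hk] using this
  -- the involution
  set f : {A : Finset (Fin (2*k)) // A.card = k} → {A : Finset (Fin (2*k)) // A.card = k} :=
    fun X => ⟨X.1.image (fun i => i + c), by
      rw [Finset.card_image_of_injective _ hinj, X.2]⟩ with hf
  have hff : ∀ X, f (f X) = X := by
    intro X
    apply Subtype.ext
    show (X.1.image (fun i => i + c)).image (fun i => i + c) = X.1
    rw [Finset.image_image]
    have : ((fun i : Fin (2*k) => i + c) ∘ (fun i => i + c)) = id := by
      funext i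
      simp only [Function.comp_apply, id_eq]
      exact swap_swap hk i
    rw [this, Finset.image_id]
  -- f swaps the filters
  have hfl : ∀ X : {A : Finset (Fin (2*k)) // A.card = k},
      ((f X).1.filter (fun i : Fin (2*k) => (i : ℕ) < k)).card =
      (X.1.filter (fun i : Fin (2*k) => k ≤ (i : ℕ))).card := by
    intro X
    have himg : (f X).1.filter (fun i : Fin (2*k) => (i : ℕ) < k) =
        (X.1.filter (fun i : Fin (2*k) => k ≤ (i : ℕ))).image (fun i => i + c) := by
      ext j
      simp only [hf, Finset.mem_filter, Finset.mem_image]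
      constructor
      · rintro ⟨⟨i, hi, rfl⟩, hlt⟩
        exact ⟨i, ⟨hi, by have := (swap_lt_iff hk i).1 hlt; omega⟩, rfl⟩
      · rintro ⟨i, ⟨hi1, hi2⟩, rfl⟩
        exact ⟨⟨i, hi1, rfl⟩, by rw [swap_lt_iff hk]; omega⟩
    rw [himg, Finset.card_image_of_injective _ hinj]
  have hfu : ∀ X : {A : Finset (Fin (2*k)) // A.card = k},
      ((f X).1.filter (fun i : Fin (2*k) => k ≤ (i : ℕ))).card =
      (X.1.filter (fun i : Fin (2*k) => (i : ℕ) < k)).card := by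
    intro X
    have himg : (f X).1.filter (fun i : Fin (2*k) => k ≤ (i : ℕ)) =
        (X.1.filter (fun i : Fin (2*k) => (i : ℕ) < k)).image (fun i => i + c) := by
      ext j
      simp only [hf, Finset.mem_filter, Finset.mem_image]
      constructor
      · rintro ⟨⟨i, hi, rfl⟩, hge⟩
        refine ⟨i, ⟨hi, ?_⟩, rfl⟩
        have h5 : ¬ (((i + c : Fin (2*k))) : ℕ) < k := not_lt.2 hge
        rw [swap_lt_iff hk] at h5
        omega
      · rintro ⟨i, ⟨hi1, hi2⟩, rfl⟩
        refine ⟨⟨i, hi1, rfl⟩, ?_⟩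
        rw [← not_lt, swap_lt_iff hk]
        exact not_not.2 hi2
    rw [himg, Finset.card_image_of_injective _ hinj]
  -- membership swap
  have hmem : ∀ X, p (f X) ↔ ¬ p X := by
    intro X
    obtain ⟨m, hm⟩ := hodd
    have h1 := hsum X
    simp only [hp, gt_iff_lt]
    rw [hfl X, hfu X]
    omega
  -- counting
  have hcard2 : (Finset.univ.filter p).card = (Finset.univ.filter (fun X => ¬ p X)).card := by
    refine Finset.card_bij' (fun X _ => f X) (fun X _ => f X) ?_ ?_ ?_ ?_ <;>
      intro X hX <;>
      simp only [Finset.mem_filter, Finset.mem_univ, true_and] at hX ⊢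
    · rw [hmem]
      exact not_not.2 hX
    · rw [← hff X] at hX
      rw [hmem] at hX
      exact not_not.1 hX
    · exact hff X
    · exact hff X
  have htotal := Finset.card_filter_add_card_filter_not (s := (Finset.univ :
      Finset {A : Finset (Fin (2*k)) // A.card = k})) (p := p)
  rw [Finset.card_univ, Fintype.card_finset_len, Fintype.card_fin] at htotal
  omega

end count

lemma sum_filters_main {k : ℕ} (X : Finset (Fin (2*k))) (hX : X.card = k) :
    (X.filter (fun i : Fin (2*k) => (i : ℕ) < k)).card +
    (X.filter (fun i : Fin (2*k) => k ≤ (i : ℕ))).card = k := by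
  have h1 : (X.filter (fun i : Fin (2*k) => k ≤ (i : ℕ))) =
      (X.filter (fun i : Fin (2*k) => ¬ ((i : ℕ) < k))) := by
    apply Finset.filter_congr
    intro i _
    simp [not_lt]
  rw [h1, Finset.card_filter_add_card_filter_not, hX]

/-- For odd `k ≥ 3`, the set `P₁` of `k`-subsets of `{1,…,2k}` containing more elements of
`{1,…,k}` than of `{k+1,…,2k}` is a distance-equalizer set of `J(2k,k)`, and
`|P₁| = C(2k,k)/2`. -/
theorem johnson_twok_k_P1_distanceEqualizer (k : ℕ) (hk : 3 ≤ k) (hodd : Odd k) :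
    IsDistanceEqualizerSet (johnsonGraph (2 * k) k)
      {X : {A : Finset (Fin (2 * k)) // A.card = k} |
        (X.1.filter (fun i : Fin (2 * k) => (i : ℕ) < k)).card > (X.1.filter (fun i : Fin (2 * k) => k ≤ (i : ℕ))).card} ∧
    Set.ncard {X : {A : Finset (Fin (2 * k)) // A.card = k} |
        (X.1.filter (fun i : Fin (2 * k) => (i : ℕ) < k)).card > (X.1.filter (fun i : Fin (2 * k) => k ≤ (i : ℕ))).card}
      = Nat.choose (2 * k) k / 2 := by
  obtain ⟨m, hm⟩ := hodd
  constructor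
  · intro u v hu hv huv
    simp only [Set.mem_setOf_eq, gt_iff_lt, not_lt] at hu hv
    have hsu := sum_filters_main u.1 u.2
    have hsv := sum_filters_main v.1 v.2
    have hua : 2 * (u.1.filter (fun i : Fin (2*k) => (i : ℕ) < k)).card < k := by omega
    have hvb : 2 * (v.1.filter (fun i : Fin (2*k) => (i : ℕ) < k)).card < k := by omega
    rcases le_total (u.1.filter (fun i : Fin (2*k) => (i : ℕ) < k)).card
        (v.1.filter (fun i : Fin (2*k) => (i : ℕ) < k)).card with h | h
    · obtain ⟨x, hx1, hx2, hx3⟩ := key_construction hk u.1 v.1 u.2 v.2 hua hvb h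
      have hsx := sum_filters_main x hx1
      refine ⟨⟨x, hx1⟩, by simp only [Set.mem_setOf_eq, gt_iff_lt]; omega, ?_⟩
      rw [jg_dist_eq, jg_dist_eq]
      show k - (u.1 ∩ x).card = k - (v.1 ∩ x).card
      rw [Finset.inter_comm u.1 x, Finset.inter_comm v.1 x, hx3]
    · obtain ⟨x, hx1, hx2, hx3⟩ := key_construction hk v.1 u.1 v.2 u.2 hvb hua h
      have hsx := sum_filters_main x hx1
      refine ⟨⟨x, hx1⟩, by simp only [Set.mem_setOf_eq, gt_iff_lt]; omega, ?_⟩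
      rw [jg_dist_eq, jg_dist_eq]
      show k - (u.1 ∩ x).card = k - (v.1 ∩ x).card
      rw [Finset.inter_comm u.1 x, Finset.inter_comm v.1 x, hx3]
  · exact count_half hk ⟨m, hm⟩
end

section
/- For every integer n ≥ 5, the equidistant dimension of the Kneser graph K(n,2) equals 3. -/
namespace EqdimKneserAux

variable {n : ℕ}

abbrev V (n : ℕ) := {A : Finset (Fin n) // A.card = 2}

lemma triple_split {a0 a1 a2 b0 b1 b2 : Prop}
    (ha01 : ¬(a0 ∧ a1)) (ha02 : ¬(a0 ∧ a2)) (ha12 : ¬(a1 ∧ a2))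
    (hb01 : ¬(b0 ∧ b1)) (hb02 : ¬(b0 ∧ b2)) (hb12 : ¬(b1 ∧ b2)) :
    ((¬a0 ∧ ¬a1) ↔ (¬b0 ∧ ¬b1)) ∨ ((¬a0 ∧ ¬a2) ↔ (¬b0 ∧ ¬b2)) ∨
      ((¬a1 ∧ ¬a2) ↔ (¬b1 ∧ ¬b2)) := by
  by_cases h0 : a0
  · have na1 : ¬a1 := fun h => ha01 ⟨h0, h⟩
    have na2 : ¬a2 := fun h => ha02 ⟨h0, h⟩
    by_cases g0 : b0
    · have nb1 : ¬b1 := fun h => hb01 ⟨g0, h⟩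
      have nb2 : ¬b2 := fun h => hb02 ⟨g0, h⟩
      exact Or.inr (Or.inr (iff_of_true ⟨na1, na2⟩ ⟨nb1, nb2⟩))
    · by_cases g1 : b1
      · exact Or.inl (iff_of_false (fun h => h.1 h0) (fun h => h.2 g1))
      · by_cases g2 : b2
        · exact Or.inr (Or.inl (iff_of_false (fun h => h.1 h0) (fun h => h.2 g2)))
        · exact Or.inr (Or.inr (iff_of_true ⟨na1, na2⟩ ⟨g1, g2⟩))
  · by_cases h1 : a1
    · have na2 : ¬a2 := fun h => ha12 ⟨h1, h⟩
      by_cases g1 : b1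
      · have nb0 : ¬b0 := fun h => hb01 ⟨h, g1⟩
        have nb2 : ¬b2 := fun h => hb12 ⟨g1, h⟩
        exact Or.inr (Or.inl (iff_of_true ⟨h0, na2⟩ ⟨nb0, nb2⟩))
      · by_cases g0 : b0
        · exact Or.inl (iff_of_false (fun h => h.2 h1) (fun h => h.1 g0))
        · by_cases g2 : b2
          · exact Or.inr (Or.inr (iff_of_false (fun h => h.1 h1) (fun h => h.2 g2)))
          · exact Or.inr (Or.inl (iff_of_true ⟨h0, na2⟩ ⟨g0, g2⟩))
    · by_cases h2 : a2
      · by_cases g2 : b2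
        · have nb0 : ¬b0 := fun h => hb02 ⟨h, g2⟩
          have nb1 : ¬b1 := fun h => hb12 ⟨h, g2⟩
          exact Or.inl (iff_of_true ⟨h0, h1⟩ ⟨nb0, nb1⟩)
        · by_cases g0 : b0
          · exact Or.inr (Or.inl (iff_of_false (fun h => h.2 h2) (fun h => h.1 g0)))
          · by_cases g1 : b1
            · exact Or.inr (Or.inr (iff_of_false (fun h => h.2 h2) (fun h => h.1 g1)))
            · exact Or.inl (iff_of_true ⟨h0, h1⟩ ⟨g0, g1⟩)
      · by_cases g0 : b0
        · have nb1 : ¬b1 := fun h => hb01 ⟨g0, h⟩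
          have nb2 : ¬b2 := fun h => hb02 ⟨g0, h⟩
          exact Or.inr (Or.inr (iff_of_true ⟨h1, h2⟩ ⟨nb1, nb2⟩))
        · by_cases g1 : b1
          · have nb2 : ¬b2 := fun h => hb12 ⟨g1, h⟩
            exact Or.inr (Or.inl (iff_of_true ⟨h0, h2⟩ ⟨g0, nb2⟩))
          · exact Or.inl (iff_of_true ⟨h0, h1⟩ ⟨g0, g1⟩)

lemma pair_inter_empty {a b : Fin n} {s : Finset (Fin n)} :
    s ∩ ({a, b} : Finset (Fin n)) = ∅ ↔ a ∉ s ∧ b ∉ s := by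
  simp only [Finset.eq_empty_iff_forall_notMem, Finset.mem_inter, Finset.mem_insert,
    Finset.mem_singleton, not_and, not_or]
  constructor
  · intro h
    constructor
    · intro ha; exact (h a ha).1 rfl
    · intro hb; exact (h b hb).2 rfl
  · intro h x hx
    constructor
    · intro he; exact h.1 (he ▸ hx)
    · intro he; exact h.2 (he ▸ hx)

lemma inter_ne_empty {s t : Finset (Fin n)} {a : Fin n} (ha : a ∈ s) (hb : a ∈ t) :
    s ∩ t ≠ ∅ := by
  intro h
  have : a ∈ s ∩ t := Finset.mem_inter.mpr ⟨ha, hb⟩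
  rw [h] at this
  exact absurd this (Finset.notMem_empty a)

lemma ne_of_mem_not_mem {u v : V n} {a : Fin n} (ha : a ∈ u.1) (hb : a ∉ v.1) : u ≠ v := by
  intro h; rw [h] at ha; exact hb ha

lemma dist_eq_one {u v : V n} (hne : u ≠ v) (h : u.1 ∩ v.1 = ∅) :
    (kneserGraph n 2).dist u v = 1 :=
  SimpleGraph.dist_eq_one_iff_adj.mpr ⟨hne, h⟩

lemma dist_eq_two (hn : 5 ≤ n) {u v : V n} (hne : u ≠ v) (h : u.1 ∩ v.1 ≠ ∅) :
    (kneserGraph n 2).dist u v = 2 := by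
  have h2u := u.2; have h2v := v.2
  have hcard : (u.1 ∪ v.1).card ≤ 3 := by
    have h1 := Finset.card_inter_add_card_union u.1 v.1
    have hpos : 0 < (u.1 ∩ v.1).card :=
      Finset.card_pos.mpr (Finset.nonempty_iff_ne_empty.mpr h)
    omega
  have hcompl : 2 ≤ (Finset.univ \ (u.1 ∪ v.1)).card := by
    rw [Finset.card_sdiff_of_subset (Finset.subset_univ _), Finset.card_univ, Fintype.card_fin]
    omega
  obtain ⟨w, hwsub, hwcard⟩ := Finset.exists_subset_card_eq hcompl
  have hw : ∀ x ∈ w, x ∉ u.1 ∧ x ∉ v.1 := by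
    intro x hx
    have := hwsub hx
    simp only [Finset.mem_sdiff, Finset.mem_union] at this
    tauto
  set W : V n := ⟨w, hwcard⟩ with hW
  have huW : u.1 ∩ w = ∅ := by
    rw [Finset.eq_empty_iff_forall_notMem]
    intro x hx
    rw [Finset.mem_inter] at hx
    exact (hw x hx.2).1 hx.1
  have hvW : v.1 ∩ w = ∅ := by
    rw [Finset.eq_empty_iff_forall_notMem]
    intro x hx
    rw [Finset.mem_inter] at hx
    exact (hw x hx.2).2 hx.1
  have hwne : w.Nonempty := Finset.card_pos.mp (by omega)
  obtain ⟨x0, hx0⟩ := hwne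
  have hneuW : u ≠ W := ne_of_mem_not_mem (u := W) hx0 (hw x0 hx0).1 |>.symm
  have hnevW : v ≠ W := ne_of_mem_not_mem (u := W) hx0 (hw x0 hx0).2 |>.symm
  have hadj1 : (kneserGraph n 2).Adj u W := ⟨hneuW, huW⟩
  have hadj2 : (kneserGraph n 2).Adj W v := ⟨hnevW.symm, by rwa [Finset.inter_comm]⟩
  have hle : (kneserGraph n 2).dist u v ≤ 2 := by
    have := SimpleGraph.dist_le
      (SimpleGraph.Walk.cons hadj1 (SimpleGraph.Walk.cons hadj2 SimpleGraph.Walk.nil))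
    simpa using this
  have h0 : (kneserGraph n 2).dist u v ≠ 0 := by
    intro h0
    rcases SimpleGraph.dist_eq_zero_iff_eq_or_not_reachable.mp h0 with h' | h'
    · exact hne h'
    · exact h' ⟨SimpleGraph.Walk.cons hadj1 (SimpleGraph.Walk.cons hadj2 SimpleGraph.Walk.nil)⟩
  have h1 : (kneserGraph n 2).dist u v ≠ 1 := by
    intro h1
    exact h (SimpleGraph.dist_eq_one_iff_adj.mp h1).2
  omega

lemma dist_eq_dist (hn : 5 ≤ n) {u v x : V n} (hux : u ≠ x) (hvx : v ≠ x)
    (h : (u.1 ∩ x.1 = ∅) ↔ (v.1 ∩ x.1 = ∅)) :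
    (kneserGraph n 2).dist u x = (kneserGraph n 2).dist v x := by
  by_cases hu : u.1 ∩ x.1 = ∅
  · rw [dist_eq_one hux hu, dist_eq_one hvx (h.mp hu)]
  · rw [dist_eq_two hn hux hu, dist_eq_two hn hvx (fun hv => hu (h.mpr hv))]

lemma dist_ne_dist (hn : 5 ≤ n) {u v x : V n} (hux : u ≠ x) (hvx : v ≠ x)
    (h1 : u.1 ∩ x.1 = ∅) (h2 : v.1 ∩ x.1 ≠ ∅) :
    (kneserGraph n 2).dist u x ≠ (kneserGraph n 2).dist v x := by
  rw [dist_eq_one hux h1, dist_eq_two hn hvx h2]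
  omega

def mkV (a b : Fin n) (h : a ≠ b) : V n := ⟨{a, b}, Finset.card_pair h⟩

/-- Lower bound: every distance-equalizer finset has at least 3 elements. -/
lemma three_le_card (hn : 5 ≤ n) (S : Finset (V n))
    (hS : IsDistanceEqualizerSet (kneserGraph n 2) ↑S) : 3 ≤ S.card := by
  by_contra hlt
  push_neg at hlt
  have h5 : (5 : ℕ) ≤ n := hn
  -- some elements of Fin n
  have he0 : (0 : ℕ) < n := by omega
  interval_cases h : S.card
  · -- S empty
    have hSe : S = ∅ := Finset.card_eq_zero.mp h
    have hne01 : (⟨0, by omega⟩ : Fin n) ≠ ⟨1, by omega⟩ :=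
      Fin.ne_of_val_ne (by norm_num)
    have hne02 : (⟨0, by omega⟩ : Fin n) ≠ ⟨2, by omega⟩ :=
      Fin.ne_of_val_ne (by norm_num)
    set u : V n := mkV ⟨0, by omega⟩ ⟨1, by omega⟩ hne01
    set v : V n := mkV ⟨0, by omega⟩ ⟨2, by omega⟩ hne02
    have huv : u ≠ v := by
      apply ne_of_mem_not_mem (a := (⟨1, by omega⟩ : Fin n))
      · simp [u, mkV]
      · simp [v, mkV, Fin.ext_iff]
    obtain ⟨x, hx, -⟩ := hS u v (by simp [hSe]) (by simp [hSe]) huv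
    simp [hSe] at hx
  · -- S = {s}
    obtain ⟨s, hSs⟩ := Finset.card_eq_one.mp h
    obtain ⟨a, b, hab, hsab⟩ := Finset.card_eq_two.mp s.2
    have hcompl : 2 ≤ (Finset.univ \ s.1).card := by
      rw [Finset.card_sdiff_of_subset (Finset.subset_univ _), Finset.card_univ, Fintype.card_fin, s.2]
      omega
    obtain ⟨w, hwsub, hwcard⟩ := Finset.exists_subset_card_eq hcompl
    obtain ⟨c, d, hcd, hwcd⟩ := Finset.card_eq_two.mp hwcard
    have hcs : c ∉ s.1 := by
      have := hwsub (show c ∈ w by rw [hwcd]; simp)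
      simp at this; exact this
    have hds : d ∉ s.1 := by
      have := hwsub (show d ∈ w by rw [hwcd]; simp)
      simp at this; exact this
    have hac : a ≠ c := fun h => hcs (h ▸ (by rw [hsab]; simp))
    set u : V n := mkV c d hcd with hu
    set v : V n := mkV a c hac with hv
    have hus : u ≠ s := ne_of_mem_not_mem (a := c) (by simp [hu, mkV]) hcs
    have hvs : v ≠ s := ne_of_mem_not_mem (a := c) (by simp [hv, mkV]) hcs
    have huv : u ≠ v := by
      apply ne_of_mem_not_mem (a := d) (by simp [hu, mkV])
      simp only [hv, mkV, Finset.mem_insert, Finset.mem_singleton, not_or]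
      constructor
      · intro hda; exact hds (hda ▸ (by rw [hsab]; simp))
      · intro hc; exact hcd hc.symm
    obtain ⟨x, hx, hdist⟩ := hS u v (by simp [hSs]; exact hus) (by simp [hSs]; exact hvs) huv
    simp [hSs] at hx
    rw [hx] at hdist
    refine dist_ne_dist hn hus hvs ?_ ?_ hdist
    · rw [Finset.inter_comm]
      exact pair_inter_empty.mpr ⟨hcs, hds⟩
    · apply inter_ne_empty (a := a) (by simp [hv, mkV]) (by rw [hsab]; simp)
  · -- S = {s, t}
    obtain ⟨s, t, hst, hSst⟩ := Finset.card_eq_two.mp h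
    by_cases hdisj : s.1 ∩ t.1 = ∅
    · -- s and t disjoint
      obtain ⟨a, b, hab, hsab⟩ := Finset.card_eq_two.mp s.2
      obtain ⟨c, d, hcd, htcd⟩ := Finset.card_eq_two.mp t.2
      have has : a ∈ s.1 := by rw [hsab]; simp
      have hbs : b ∈ s.1 := by rw [hsab]; simp
      have hct : c ∈ t.1 := by rw [htcd]; simp
      have hdt : d ∈ t.1 := by rw [htcd]; simp
      have hat : a ∉ t.1 := fun hc => inter_ne_empty has hc hdisj
      have hbt : b ∉ t.1 := fun hc => inter_ne_empty hbs hc hdisj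
      have hcs : c ∉ s.1 := fun hc => inter_ne_empty hc hct hdisj
      have hds : d ∉ s.1 := fun hc => inter_ne_empty hc hdt hdisj
      have hcompl : 1 ≤ (Finset.univ \ (s.1 ∪ t.1)).card := by
        rw [Finset.card_sdiff_of_subset (Finset.subset_univ _), Finset.card_univ, Fintype.card_fin]
        have := Finset.card_union_le s.1 t.1
        rw [s.2, t.2] at this
        omega
      obtain ⟨e, he⟩ := Finset.card_pos.mp (by omega : 0 < (Finset.univ \ (s.1 ∪ t.1)).card)
      simp only [Finset.mem_sdiff, Finset.mem_union, not_or] at he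
      obtain ⟨-, hes, het⟩ := he
      have hce : c ≠ e := fun hc => het (hc ▸ hct)
      have hae : a ≠ e := fun hc => hes (hc ▸ has)
      set u : V n := mkV c e hce with hu
      set v : V n := mkV a e hae with hv
      have hus : u ≠ s := ne_of_mem_not_mem (a := c) (by simp [hu, mkV]) hcs
      have hut : u ≠ t := ne_of_mem_not_mem (a := e) (by simp [hu, mkV]) het
      have hvs : v ≠ s := ne_of_mem_not_mem (a := e) (by simp [hv, mkV]) hes
      have hvt : v ≠ t := ne_of_mem_not_mem (a := a) (by simp [hv, mkV]) hat
      have hac : a ≠ c := fun hc => hat (hc ▸ hct)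
      have huv : u ≠ v := by
        apply ne_of_mem_not_mem (a := a) (by simp [hv, mkV]) ?_ |>.symm
        simp only [hu, mkV, Finset.mem_insert, Finset.mem_singleton, not_or]
        exact ⟨hac, hae⟩
      obtain ⟨x, hx, hdist⟩ := hS u v (by simp [hSst]; exact ⟨hus, hut⟩)
        (by simp [hSst]; exact ⟨hvs, hvt⟩) huv
      simp [hSst] at hx
      rcases hx with hx | hx <;> rw [hx] at hdist
      · refine dist_ne_dist hn hus hvs ?_ ?_ hdist
        · rw [Finset.inter_comm]
          exact pair_inter_empty.mpr ⟨hcs, hes⟩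
        · exact inter_ne_empty (a := a) (by simp [hv, mkV]) has
      · refine dist_ne_dist hn hvt hut ?_ ?_ hdist.symm
        · rw [Finset.inter_comm]
          exact pair_inter_empty.mpr ⟨hat, het⟩
        · exact inter_ne_empty (a := c) (by simp [hu, mkV]) hct
    · -- s and t intersect
      obtain ⟨a, ha⟩ := Finset.nonempty_iff_ne_empty.mpr hdisj
      rw [Finset.mem_inter] at ha
      obtain ⟨has, hat⟩ := ha
      -- s.1 = {a, b}
      obtain ⟨b, hbs, hsab⟩ : ∃ b, b ≠ a ∧ s.1 = {a, b} := by
        obtain ⟨p, q, hpq, hs⟩ := Finset.card_eq_two.mp s.2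
        rw [hs] at has
        simp only [Finset.mem_insert, Finset.mem_singleton] at has
        rcases has with rfl | rfl
        · exact ⟨q, hpq.symm, hs⟩
        · exact ⟨p, hpq, by rw [hs, Finset.pair_comm]⟩
      obtain ⟨c, hct, htac⟩ : ∃ c, c ≠ a ∧ t.1 = {a, c} := by
        obtain ⟨p, q, hpq, ht⟩ := Finset.card_eq_two.mp t.2
        rw [ht] at hat
        simp only [Finset.mem_insert, Finset.mem_singleton] at hat
        rcases hat with rfl | rfl
        · exact ⟨q, hpq.symm, ht⟩
        · exact ⟨p, hpq, by rw [ht, Finset.pair_comm]⟩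
      have hbc : b ≠ c := by
        intro hc
        apply hst
        apply Subtype.ext
        rw [hsab, htac, hc]
      have hcompl : 2 ≤ (Finset.univ \ (s.1 ∪ t.1)).card := by
        rw [Finset.card_sdiff_of_subset (Finset.subset_univ _), Finset.card_univ, Fintype.card_fin]
        have hle3 : (s.1 ∪ t.1).card ≤ 3 := by
          have h1 := Finset.card_inter_add_card_union s.1 t.1
          have hpos : 0 < (s.1 ∩ t.1).card :=
            Finset.card_pos.mpr (Finset.nonempty_iff_ne_empty.mpr hdisj)
          have := s.2; have := t.2
          omega
        omega
      obtain ⟨w, hwsub, hwcard⟩ := Finset.exists_subset_card_eq hcompl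
      obtain ⟨d, e, hde, hwde⟩ := Finset.card_eq_two.mp hwcard
      have hdmem : ∀ x ∈ w, x ∉ s.1 ∧ x ∉ t.1 := by
        intro x hx
        have := hwsub hx
        simp only [Finset.mem_sdiff, Finset.mem_union, not_or] at this
        exact this.2
      have hds : d ∉ s.1 := (hdmem d (by rw [hwde]; simp)).1
      have hdt : d ∉ t.1 := (hdmem d (by rw [hwde]; simp)).2
      have hes : e ∉ s.1 := (hdmem e (by rw [hwde]; simp)).1
      have het : e ∉ t.1 := (hdmem e (by rw [hwde]; simp)).2
      set u : V n := mkV d e hde with hu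
      set v : V n := mkV b c hbc with hv
      have hbs' : b ∈ s.1 := by rw [hsab]; simp
      have hct' : c ∈ t.1 := by rw [htac]; simp
      have hbt : b ∉ t.1 := by
        rw [htac]
        simp only [Finset.mem_insert, Finset.mem_singleton, not_or]
        exact ⟨hbs, hbc⟩
      have hcs : c ∉ s.1 := by
        rw [hsab]
        simp only [Finset.mem_insert, Finset.mem_singleton, not_or]
        exact ⟨hct, fun hc => hbc hc.symm⟩
      have hus : u ≠ s := ne_of_mem_not_mem (a := d) (by simp [hu, mkV]) hds
      have hut : u ≠ t := ne_of_mem_not_mem (a := d) (by simp [hu, mkV]) hdt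
      have hvs : v ≠ s := ne_of_mem_not_mem (a := c) (by simp [hv, mkV]) hcs
      have hvt : v ≠ t := ne_of_mem_not_mem (a := b) (by simp [hv, mkV]) hbt
      have huv : u ≠ v := by
        apply ne_of_mem_not_mem (a := b) (by simp [hv, mkV]) ?_ |>.symm
        simp only [hu, mkV, Finset.mem_insert, Finset.mem_singleton, not_or]
        constructor
        · intro hc; exact hds (hc ▸ hbs')
        · intro hc; exact hes (hc ▸ hbs')
      obtain ⟨x, hx, hdist⟩ := hS u v (by simp [hSst]; exact ⟨hus, hut⟩)
        (by simp [hSst]; exact ⟨hvs, hvt⟩) huv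
      simp [hSst] at hx
      rcases hx with hx | hx <;> rw [hx] at hdist
      · refine dist_ne_dist hn hus hvs ?_ ?_ hdist
        · rw [Finset.inter_comm]; exact pair_inter_empty.mpr ⟨hds, hes⟩
        · exact inter_ne_empty (a := b) (by simp [hv, mkV]) hbs'
      · refine dist_ne_dist hn hut hvt ?_ ?_ hdist
        · rw [Finset.inter_comm]; exact pair_inter_empty.mpr ⟨hdt, het⟩
        · exact inter_ne_empty (a := c) (by simp [hv, mkV]) hct'

/-- Upper bound: the "triangle" `{01, 02, 12}` is a distance-equalizer set. -/
lemma exists_equalizer (hn : 5 ≤ n) :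
    ∃ S : Finset (V n), IsDistanceEqualizerSet (kneserGraph n 2) ↑S ∧ S.card = 3 := by
  set e0 : Fin n := ⟨0, by omega⟩ with he0
  set e1 : Fin n := ⟨1, by omega⟩ with he1
  set e2 : Fin n := ⟨2, by omega⟩ with he2
  have h01 : e0 ≠ e1 := Fin.ne_of_val_ne (by norm_num)
  have h02 : e0 ≠ e2 := Fin.ne_of_val_ne (by norm_num)
  have h12 : e1 ≠ e2 := Fin.ne_of_val_ne (by norm_num)
  set A01 : V n := mkV e0 e1 h01 with hA01
  set A02 : V n := mkV e0 e2 h02 with hA02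
  set A12 : V n := mkV e1 e2 h12 with hA12
  have hne1 : A01 ≠ A02 :=
    ne_of_mem_not_mem (a := e1) (by simp [hA01, mkV])
      (by simp [hA02, mkV]; exact ⟨h01.symm ∘ Eq.symm ∘ Eq.symm, h12⟩)
  have hne2 : A01 ≠ A12 :=
    ne_of_mem_not_mem (a := e0) (by simp [hA01, mkV])
      (by simp [hA12, mkV]; exact ⟨h01, h02⟩)
  have hne3 : A02 ≠ A12 :=
    ne_of_mem_not_mem (a := e0) (by simp [hA02, mkV])
      (by simp [hA12, mkV]; exact ⟨h01, h02⟩)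
  refine ⟨{A01, A02, A12}, ?_, ?_⟩
  · intro u v hu hv huv
    simp only [Finset.coe_insert, Set.mem_insert_iff, Finset.coe_singleton,
      Set.mem_singleton_iff, not_or] at hu hv
    obtain ⟨hu1, hu2, hu3⟩ := hu
    obtain ⟨hv1, hv2, hv3⟩ := hv
    have key : ∀ (w : V n) (a b : Fin n) (hab : a ≠ b),
        a ∈ w.1 → b ∈ w.1 → w = mkV a b hab := by
      intro w a b hab ha hb
      apply Subtype.ext
      have hsub : ({a, b} : Finset (Fin n)) ⊆ w.1 := by
        intro x hx
        simp only [Finset.mem_insert, Finset.mem_singleton] at hx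
        rcases hx with rfl | rfl
        · exact ha
        · exact hb
      exact (Finset.eq_of_subset_of_card_le hsub
        (by rw [w.2, Finset.card_pair hab])).symm
    have nu01 : ¬(e0 ∈ u.1 ∧ e1 ∈ u.1) := fun ⟨h, h'⟩ => hu1 (key u e0 e1 h01 h h')
    have nu02 : ¬(e0 ∈ u.1 ∧ e2 ∈ u.1) := fun ⟨h, h'⟩ => hu2 (key u e0 e2 h02 h h')
    have nu12 : ¬(e1 ∈ u.1 ∧ e2 ∈ u.1) := fun ⟨h, h'⟩ => hu3 (key u e1 e2 h12 h h')
    have nv01 : ¬(e0 ∈ v.1 ∧ e1 ∈ v.1) := fun ⟨h, h'⟩ => hv1 (key v e0 e1 h01 h h')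
    have nv02 : ¬(e0 ∈ v.1 ∧ e2 ∈ v.1) := fun ⟨h, h'⟩ => hv2 (key v e0 e2 h02 h h')
    have nv12 : ¬(e1 ∈ v.1 ∧ e2 ∈ v.1) := fun ⟨h, h'⟩ => hv3 (key v e1 e2 h12 h h')
    have key2 : ((e0 ∉ u.1 ∧ e1 ∉ u.1) ↔ (e0 ∉ v.1 ∧ e1 ∉ v.1)) ∨
        ((e0 ∉ u.1 ∧ e2 ∉ u.1) ↔ (e0 ∉ v.1 ∧ e2 ∉ v.1)) ∨
        ((e1 ∉ u.1 ∧ e2 ∉ u.1) ↔ (e1 ∉ v.1 ∧ e2 ∉ v.1)) :=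
      triple_split nu01 nu02 nu12 nv01 nv02 nv12
    rcases key2 with hk | hk | hk
    · refine ⟨A01, by simp, dist_eq_dist hn hu1 hv1 ?_⟩
      rw [show A01.1 = ({e0, e1} : Finset (Fin n)) from rfl,
        pair_inter_empty, pair_inter_empty]
      exact hk
    · refine ⟨A02, by simp, dist_eq_dist hn hu2 hv2 ?_⟩
      rw [show A02.1 = ({e0, e2} : Finset (Fin n)) from rfl,
        pair_inter_empty, pair_inter_empty]
      exact hk
    · refine ⟨A12, by simp, dist_eq_dist hn hu3 hv3 ?_⟩
      rw [show A12.1 = ({e1, e2} : Finset (Fin n)) from rfl,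
        pair_inter_empty, pair_inter_empty]
      exact hk
  · exact Finset.card_eq_three.mpr ⟨A01, A02, A12, hne1, hne2, hne3, rfl⟩

end EqdimKneserAux

/-- For every `n ≥ 5`, the equidistant dimension of the Kneser graph `K(n,2)` equals `3`. -/
theorem eqdim_kneser_two (n : ℕ) (hn : 5 ≤ n) :
    eqdim (kneserGraph n 2) = 3 := by
  obtain ⟨S, hS, hScard⟩ := EqdimKneserAux.exists_equalizer hn
  apply le_antisymm
  · exact Nat.sInf_le ⟨S, hS, hScard⟩
  · refine le_csInf ⟨3, S, hS, hScard⟩ ?_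
    rintro m ⟨T, hT, rfl⟩
    exact EqdimKneserAux.three_le_card hn T hT
end
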